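/- arXiv:math/0407485 — 4 statements merged into one kernel-verified Lean document; each statement's English description precedes it below -/
import Mathlib

section
/- Let K ⊆ ℝⁿ be a proper cone. Then there exists a function N from real n×n matrices to ℝ which is a norm (i.e., N(A) = 0 iff A = 0, N(λA) = |λ|N(A) for all real λ, and N(A+B) ≤ N(A)+N(B)) and which satisfies N(A) ≤ N(A+B) for all matrices A and B that both leave the cone K invariant. -/
/-- `K ⊆ ℝⁿ` is a proper cone: a closed convex cone with nonempty interior
containing no straight line. -/
def IsProperCone {n : ℕ} (K : Set (Fin n → ℝ)) : Prop :=
  IsClosed K ∧ Convex ℝ K ∧ (∀ c : ℝ, 0 ≤ c → ∀ v ∈ K, c • v ∈ K) ∧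
    (interior K).Nonempty ∧ K ∩ (-K) = {0}

/-- The matrix `A` leaves the cone `K` invariant. -/
def LeavesInvariant {n : ℕ} (A : Matrix (Fin n) (Fin n) ℝ)
    (K : Set (Fin n → ℝ)) : Prop :=
  ∀ v ∈ K, A.mulVec v ∈ K

open Matrix
open scoped RealInnerProductSpace

lemma dual_vectors {n : ℕ} (K : Set (Fin n → ℝ)) (hK : IsProperCone K) :
    ∃ v : Option (Fin n) → (Fin n → ℝ),
      (∀ o, ∀ y ∈ K, 0 ≤ y ⬝ᵥ v o) ∧
      (∀ w : Fin n → ℝ, (∀ o, w ⬝ᵥ v o = 0) → w = 0) := by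
  obtain ⟨hclosed, hconv, hsmul, hint, hpointed⟩ := hK
  have h0K : (0 : Fin n → ℝ) ∈ K := by
    obtain ⟨x₀, hx₀⟩ := hint
    simpa using hsmul 0 le_rfl x₀ (interior_subset hx₀)
  have haddK : ∀ x ∈ K, ∀ y ∈ K, x + y ∈ K := by
    intro x hx y hy
    have h2 : ((1:ℝ)/2) • x + ((1:ℝ)/2) • y ∈ K :=
      hconv hx hy (by norm_num) (by norm_num) (by norm_num)
    have := hsmul 2 (by norm_num) _ h2
    have hxy : (2:ℝ) • (((1:ℝ)/2) • x + ((1:ℝ)/2) • y) = x + y := by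
      rw [smul_add, smul_smul, smul_smul]; norm_num
    rwa [hxy] at this
  -- work in Euclidean space
  set H := EuclideanSpace ℝ (Fin n)
  let KH : Set H := {x : H | x.ofLp ∈ K}
  have hKHclosed : IsClosed KH := hclosed.preimage (PiLp.continuous_ofLp 2 _)
  let C : ProperCone ℝ H :=
    { carrier := KH
      zero_mem' := h0K
      smul_mem' := fun c x hx => hsmul c c.2 x.ofLp hx
      add_mem' := fun {x y} hx hy => haddK x.ofLp hx y.ofLp hy
      isClosed' := hKHclosed }
  have hdd : ProperCone.innerDual (ProperCone.innerDual (C : Set H) : Set H) = C :=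
    ProperCone.innerDual_innerDual C
  let ι : (Fin n → ℝ) → H := WithLp.toLp 2
  set Dset : Set H := (ProperCone.innerDual (C : Set H) : Set H) with hDset
  have hDmem : ∀ y : H, y ∈ Dset ↔ ∀ x ∈ KH, 0 ≤ ⟪x, y⟫ := fun y => Iff.rfl
  have hinner : ∀ x y : Fin n → ℝ, ⟪ι x, ι y⟫ = x ⬝ᵥ y := by
    intro x y
    rw [PiLp.inner_apply]; simp [ι, dotProduct, mul_comm]
  -- the span of the dual cone is everything
  have hspan : Submodule.span ℝ Dset = ⊤ := by
    by_contra hne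
    have hbot : (Submodule.span ℝ Dset)ᗮ ≠ ⊥ :=
      fun h => hne (Submodule.orthogonal_eq_bot_iff.mp h)
    obtain ⟨z, hz, hz0⟩ := Submodule.exists_mem_ne_zero_of_ne_bot hbot
    have hzD : ∀ y ∈ Dset, ⟪y, z⟫ = 0 := fun y hy =>
      (Submodule.mem_orthogonal _ _).1 hz y (Submodule.subset_span hy)
    have hzC : z ∈ (C : Set H) := by
      rw [← hdd]
      intro y hy
      exact le_of_eq (hzD y hy).symm
    have hzC' : -z ∈ (C : Set H) := by
      rw [← hdd]
      intro y hy
      show (0:ℝ) ≤ ⟪y, -z⟫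
      rw [inner_neg_right, hzD y hy, neg_zero]
    have hmem : z.ofLp ∈ K ∩ (-K) := ⟨hzC, Set.mem_neg.2 hzC'⟩
    rw [hpointed] at hmem
    exact hz0 (WithLp.ofLp_injective 2 (by simpa using hmem))
  -- hence the dual cone has nonempty interior
  have hDconv : Convex ℝ Dset := (ProperCone.innerDual (C : Set H)).convex
  have h0D : (0 : H) ∈ Dset := (ProperCone.innerDual (C : Set H)).zero_mem
  have haff : affineSpan ℝ Dset = ⊤ := by
    rw [eq_top_iff]
    intro x _
    have hdir : Submodule.span ℝ Dset ≤ (affineSpan ℝ Dset).direction := by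
      rw [direction_affineSpan]
      apply Submodule.span_le.2
      intro d hd
      have := vsub_mem_vectorSpan ℝ hd h0D
      simpa using this
    have hx : x ∈ (affineSpan ℝ Dset).direction := hdir (hspan ▸ Submodule.mem_top)
    have h0 : (0 : H) ∈ affineSpan ℝ Dset := subset_affineSpan ℝ Dset h0D
    have := AffineSubspace.vadd_mem_of_mem_direction hx h0
    simpa using this
  have hintD : (interior Dset).Nonempty := by
    have := interior_convexHull_nonempty_iff_affineSpan_eq_top.mpr haff
    rwa [hDconv.convexHull_eq] at this
  obtain ⟨e, he⟩ := hintD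
  obtain ⟨ε, hε, hball⟩ := Metric.mem_nhds_iff.1 (mem_interior_iff_mem_nhds.1 he)
  let e' : Fin n → ℝ := e.ofLp
  let v : Option (Fin n) → (Fin n → ℝ) :=
    fun o => Option.elim o e' (fun j => e' + (ε/2) • (Pi.single j 1 : Fin n → ℝ))
  have hmemD : ∀ o, ι (v o) ∈ Dset := by
    rintro (_ | j)
    · exact interior_subset he
    · apply hball
      have hd : dist (ι (v (some j))) e = ‖ι ((ε/2) • (Pi.single j 1 : Fin n → ℝ))‖ := by
        have : ι (v (some j)) = e + ι ((ε/2) • (Pi.single j 1 : Fin n → ℝ)) := rfl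
        rw [this, dist_self_add_left]
      have h1 : ‖ι ((ε/2) • (Pi.single j 1 : Fin n → ℝ))‖ = ε/2 := by
        have h2 : ι ((ε/2) • (Pi.single j 1 : Fin n → ℝ))
            = (ε/2) • (EuclideanSpace.single j (1:ℝ)) := rfl
        rw [h2, norm_smul, EuclideanSpace.norm_single]
        rw [show ‖(1:ℝ)‖ = 1 from norm_one, mul_one, Real.norm_eq_abs, abs_of_pos (by positivity : (0:ℝ) < ε/2)]
      rw [Metric.mem_ball, hd, h1]
      linarith
  refine ⟨v, ?_, ?_⟩
  · intro o y hy
    rw [← hinner]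
    exact (hDmem _).1 (hmemD o) (ι y) hy
  · intro w hw
    have hwe : w ⬝ᵥ e' = 0 := hw none
    funext j
    have hj := hw (some j)
    show w j = 0
    have : w ⬝ᵥ v (some j) = (ε/2) * w j := by
      show w ⬝ᵥ (e' + (ε/2) • (Pi.single j 1 : Fin n → ℝ)) = (ε/2) * w j
      rw [dotProduct_add, hwe, zero_add, dotProduct_smul, dotProduct_single]
      simp [smul_eq_mul]
    rw [hj] at this
    have h2 : (ε/2) ≠ 0 := by positivity
    have := this.symm
    rcases mul_eq_zero.mp this with h | h
    · exact absurd h h2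
    · exact h

lemma primal_vectors {n : ℕ} (K : Set (Fin n → ℝ)) (hK : IsProperCone K) :
    ∃ u : Option (Fin n) → (Fin n → ℝ),
      (∀ o, u o ∈ K) ∧
      (∀ A : Matrix (Fin n) (Fin n) ℝ, (∀ o, A.mulVec (u o) = 0) → A = 0) := by
  obtain ⟨-, -, -, hint, -⟩ := hK
  obtain ⟨x₀, hx₀⟩ := hint
  obtain ⟨r, hr, hball⟩ := Metric.mem_nhds_iff.1 (mem_interior_iff_mem_nhds.1 hx₀)
  refine ⟨fun o => Option.elim o x₀ (fun j => x₀ + (r/2) • (Pi.single j 1 : Fin n → ℝ)),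
    ?_, ?_⟩
  · rintro (_ | j)
    · exact interior_subset hx₀
    · apply hball
      rw [Metric.mem_ball]
      show dist (x₀ + (r/2) • (Pi.single j 1 : Fin n → ℝ)) x₀ < r
      rw [dist_self_add_left, norm_smul, Pi.norm_single, Real.norm_eq_abs,
        Real.norm_eq_abs, abs_of_pos (by positivity : (0:ℝ) < r/2)]
      rw [abs_one, mul_one]
      linarith
  · intro A hA
    have h0 : A.mulVec x₀ = 0 := hA none
    ext i j
    have hj := hA (some j)
    simp only [Option.elim] at hj
    rw [Matrix.mulVec_add, h0, zero_add, Matrix.mulVec_smul] at hj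
    have hsingle : A.mulVec (Pi.single j 1 : Fin n → ℝ) = 0 := by
      have : (r/2 : ℝ) ≠ 0 := by positivity
      exact (smul_eq_zero.mp hj).resolve_left this
    have := congrFun hsingle i
    rw [Matrix.mulVec_single] at this
    simpa using this

/-- Associated to any proper cone `K` there is a matrix norm `N` satisfying
`N(A) ≤ N(A+B)` for all matrices `A`, `B` leaving `K` invariant. -/
theorem exists_cone_monotone_norm {n : ℕ} (K : Set (Fin n → ℝ))
    (hK : IsProperCone K) :
    ∃ N : Matrix (Fin n) (Fin n) ℝ → ℝ,
      (∀ X, N X = 0 ↔ X = 0) ∧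
      (∀ (c : ℝ) (X), N (c • X) = |c| * N X) ∧
      (∀ X Y, N (X + Y) ≤ N X + N Y) ∧
      (∀ A B, LeavesInvariant A K → LeavesInvariant B K → N A ≤ N (A + B)) := by
  obtain ⟨u, huK, huinj⟩ := primal_vectors K hK
  obtain ⟨v, hvK, hvinj⟩ := dual_vectors K hK
  refine ⟨fun A => ∑ o : Option (Fin n), ∑ o' : Option (Fin n),
    |A.mulVec (u o) ⬝ᵥ v o'|, ?_, ?_, ?_, ?_⟩
  · intro X
    constructor
    · intro hX
      apply huinj
      intro o
      apply hvinj
      intro o'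
      have hnn : ∀ p ∈ Finset.univ, (0:ℝ) ≤ ∑ o' : Option (Fin n),
          |X.mulVec (u p) ⬝ᵥ v o'| := fun p _ =>
        Finset.sum_nonneg fun q _ => abs_nonneg _
      have h1 := (Finset.sum_eq_zero_iff_of_nonneg hnn).1 hX o (Finset.mem_univ o)
      have h2 := (Finset.sum_eq_zero_iff_of_nonneg
        (fun q _ => abs_nonneg _)).1 h1 o' (Finset.mem_univ o')
      exact abs_eq_zero.mp h2
    · rintro rfl
      simp [Matrix.zero_mulVec, zero_dotProduct]
  · intro c X
    rw [Finset.mul_sum]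
    refine Finset.sum_congr rfl fun o _ => ?_
    rw [Finset.mul_sum]
    refine Finset.sum_congr rfl fun o' _ => ?_
    rw [Matrix.smul_mulVec, smul_dotProduct, smul_eq_mul, abs_mul]
  · intro X Y
    rw [← Finset.sum_add_distrib]
    refine Finset.sum_le_sum fun o _ => ?_
    rw [← Finset.sum_add_distrib]
    refine Finset.sum_le_sum fun o' _ => ?_
    rw [Matrix.add_mulVec, add_dotProduct]
    exact abs_add_le _ _
  · intro A B hA hB
    refine Finset.sum_le_sum fun o _ => Finset.sum_le_sum fun o' _ => ?_
    have hAnn : 0 ≤ A.mulVec (u o) ⬝ᵥ v o' := hvK o' _ (hA _ (huK o))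
    have hBnn : 0 ≤ B.mulVec (u o) ⬝ᵥ v o' := hvK o' _ (hB _ (huK o))
    rw [abs_of_nonneg hAnn, Matrix.add_mulVec, add_dotProduct,
      abs_of_nonneg (by linarith)]
    linarith
end

section
/- Let A₁,…,Aₘ be real n×n matrices that all leave a common proper cone K ⊆ ℝⁿ invariant. Then (1/m)·ρ(A₁ + ··· + Aₘ) ≤ ρ(A₁,…,Aₘ) ≤ ρ(A₁ + ··· + Aₘ), where ρ(A₁ + ··· + Aₘ) is the spectral radius of the single matrix A₁ + ··· + Aₘ. -/
open scoped Kronecker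

/-- The ℓ₂ operator norm of a square real matrix. -/
noncomputable def l2OpNorm {ι : Type*} [Fintype ι] [DecidableEq ι]
    (A : Matrix ι ι ℝ) : ℝ :=
  ‖Matrix.toEuclideanCLM (𝕜 := ℝ) A‖

/-- The product `A_{σ_k} ⋯ A_{σ_1}` associated to the word `σ`. -/
noncomputable def wordProd {ι : Type*} [Fintype ι] [DecidableEq ι] {m k : ℕ}
    (A : Fin m → Matrix ι ι ℝ) (σ : Fin k → Fin m) : Matrix ι ι ℝ :=
  (List.ofFn fun i => A (σ i)).reverse.prod

/-- The joint spectral radius of `A₁, …, Aₘ` (w.r.t. the ℓ₂ operator norm). -/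
noncomputable def jsr {ι : Type*} [Fintype ι] [DecidableEq ι] {m : ℕ}
    (A : Fin m → Matrix ι ι ℝ) : ℝ :=
  Filter.atTop.limsup fun k : ℕ =>
    ⨆ σ : Fin k → Fin m, l2OpNorm (wordProd A σ) ^ ((1 : ℝ) / (k : ℝ))

/-- The spectral radius of a single matrix, `ρ(A) = lim_k ‖A^k‖^{1/k}`. -/
noncomputable def specRad {ι : Type*} [Fintype ι] [DecidableEq ι]
    (A : Matrix ι ι ℝ) : ℝ :=
  Filter.atTop.limsup fun k : ℕ => l2OpNorm (A ^ k) ^ ((1 : ℝ) / (k : ℝ))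

open Filter Metric Set

section helpers

variable {n : ℕ}

lemma l2OpNorm_nonneg (A : Matrix (Fin n) (Fin n) ℝ) : 0 ≤ l2OpNorm A := norm_nonneg _

lemma l2OpNorm_mul_le (A B : Matrix (Fin n) (Fin n) ℝ) :
    l2OpNorm (A * B) ≤ l2OpNorm A * l2OpNorm B := by
  unfold l2OpNorm
  rw [map_mul]
  exact ContinuousLinearMap.opNorm_comp_le _ _

lemma l2OpNorm_sum_le {α : Type*} (s : Finset α) (f : α → Matrix (Fin n) (Fin n) ℝ) :
    l2OpNorm (∑ a ∈ s, f a) ≤ ∑ a ∈ s, l2OpNorm (f a) := by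
  unfold l2OpNorm
  rw [map_sum]
  exact norm_sum_le _ _

lemma pi_norm_le_euclidean (x : Fin n → ℝ) :
    ‖x‖ ≤ ‖(WithLp.equiv 2 (Fin n → ℝ)).symm x‖ := by
  rw [pi_norm_le_iff_of_nonneg (norm_nonneg _)]
  intro i
  rw [EuclideanSpace.norm_eq]
  have h1 : ‖x i‖ = Real.sqrt (‖x i‖ ^ 2) := (Real.sqrt_sq (norm_nonneg _)).symm
  rw [h1]
  apply Real.sqrt_le_sqrt
  simp only [WithLp.equiv_symm_apply, PiLp.toLp_apply]
  exact Finset.single_le_sum (fun j _ => sq_nonneg ‖x j‖) (Finset.mem_univ i)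

lemma euclidean_norm_le (x : Fin n → ℝ) :
    ‖(WithLp.equiv 2 (Fin n → ℝ)).symm x‖ ≤ Real.sqrt n * ‖x‖ := by
  rw [EuclideanSpace.norm_eq]
  have h2 : ∀ i, ‖((WithLp.equiv 2 (Fin n → ℝ)).symm x) i‖ ^ 2 ≤ ‖x‖ ^ 2 := by
    intro i
    simp only [WithLp.equiv_symm_apply, PiLp.toLp_apply]
    exact pow_le_pow_left₀ (norm_nonneg _) (norm_le_pi_norm x i) 2
  calc Real.sqrt (∑ i, ‖((WithLp.equiv 2 (Fin n → ℝ)).symm x) i‖ ^ 2)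
      ≤ Real.sqrt (∑ _i : Fin n, ‖x‖ ^ 2) :=
        Real.sqrt_le_sqrt (Finset.sum_le_sum fun i _ => h2 i)
    _ = Real.sqrt n * ‖x‖ := by
        rw [Finset.sum_const, Finset.card_univ, Fintype.card_fin, nsmul_eq_mul,
          Real.sqrt_mul (by positivity), Real.sqrt_sq (norm_nonneg _)]

lemma le_infDist' {E : Type*} [PseudoMetricSpace E] {s : Set E} (hs : s.Nonempty) {x : E} {b : ℝ}
    (h : ∀ y ∈ s, b ≤ dist x y) : b ≤ Metric.infDist x s := by
  by_contra hlt
  push_neg at hlt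
  obtain ⟨y, hy, hd⟩ := (Metric.infDist_lt_iff hs).1 hlt
  exact absurd hd (not_lt.2 (h y hy))

lemma limsup_const_mul' (c : ℝ) (hc : 0 < c) (u : ℕ → ℝ) (M : ℝ)
    (h0 : ∀ᶠ k in atTop, 0 ≤ u k) (hM : ∀ᶠ k in atTop, u k ≤ M) :
    Filter.limsup (fun k => c * u k) atTop = c * Filter.limsup u atTop := by
  have hb : IsBoundedUnder (· ≤ ·) atTop u := isBoundedUnder_of_eventually_le hM
  have hcb : IsCoboundedUnder (· ≤ ·) atTop u := isCoboundedUnder_le_of_eventually_le atTop h0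
  have hb' : IsBoundedUnder (· ≤ ·) atTop (fun k => c * u k) :=
    isBoundedUnder_of_eventually_le (a := c * M) (hM.mono fun k hk => by nlinarith)
  have hcb' : IsCoboundedUnder (· ≤ ·) atTop (fun k => c * u k) :=
    isCoboundedUnder_le_of_eventually_le (x := 0) atTop (h0.mono fun k hk => by nlinarith)
  simpa using ((OrderIso.mulLeft₀ c hc).limsup_apply (u := u) (f := atTop) hb hcb hb' hcb').symm

end helpers


variable {n : ℕ} {K : Set (Fin n → ℝ)}

lemma IsProperCone.add_mem (hK : IsProperCone K) {u v : Fin n → ℝ}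
    (hu : u ∈ K) (hv : v ∈ K) : u + v ∈ K := by
  obtain ⟨-, hcv, hsc, -, -⟩ := hK
  have hmid : (1/2 : ℝ) • u + (1/2 : ℝ) • v ∈ K :=
    hcv hu hv (by norm_num) (by norm_num) (by norm_num)
  have := hsc 2 (by norm_num) _ hmid
  rwa [smul_add, smul_smul, smul_smul, show (2 : ℝ) * (1/2) = 1 by norm_num, one_smul, one_smul] at this

lemma IsProperCone.zero_mem (hK : IsProperCone K) : (0 : Fin n → ℝ) ∈ K := by
  obtain ⟨e, he⟩ := hK.2.2.2.1
  simpa using hK.2.2.1 0 le_rfl e (interior_subset he)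

/-- `φ x = dist(x, -K)`, the key sublinear functional. -/
noncomputable def conePhi (K : Set (Fin n → ℝ)) (x : Fin n → ℝ) : ℝ :=
  Metric.infDist x (-K)

lemma le_infDist'' {E : Type*} [PseudoMetricSpace E] {s : Set E} (hs : s.Nonempty) {x : E} {b : ℝ}
    (h : ∀ y ∈ s, b ≤ dist x y) : b ≤ Metric.infDist x s := by
  by_contra hlt
  push_neg at hlt
  obtain ⟨y, hy, hd⟩ := (Metric.infDist_lt_iff hs).1 hlt
  exact absurd hd (not_lt.2 (h y hy))

lemma conePhi_nonneg (K : Set (Fin n → ℝ)) (x : Fin n → ℝ) : 0 ≤ conePhi K x :=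
  Metric.infDist_nonneg

lemma IsProperCone.negK_nonempty (hK : IsProperCone K) : (-K).Nonempty :=
  ⟨0, by simpa using hK.zero_mem⟩

lemma IsProperCone.conePhi_le_norm (hK : IsProperCone K) (x : Fin n → ℝ) :
    conePhi K x ≤ ‖x‖ := by
  have h0 : (0 : Fin n → ℝ) ∈ -K := by simpa using hK.zero_mem
  simpa [conePhi] using Metric.infDist_le_dist_of_mem h0

lemma IsProperCone.conePhi_add_le (hK : IsProperCone K) (x : Fin n → ℝ) {k : Fin n → ℝ}
    (hk : k ∈ K) : conePhi K x ≤ conePhi K (x + k) := by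
  apply le_infDist'' hK.negK_nonempty
  intro y hy
  rw [Set.mem_neg] at hy
  have hky : k + -y ∈ K := hK.add_mem hk hy
  have : -(k + -y) ∈ -K := by rwa [Set.mem_neg, neg_neg]
  calc conePhi K x ≤ dist x (-(k + -y)) := Metric.infDist_le_dist_of_mem this
    _ = dist (x + k) y := by rw [dist_eq_norm, dist_eq_norm]; ring_nf
    _ = dist (x + k) y := rfl

lemma IsProperCone.conePhi_smul_le (hK : IsProperCone K) {c : ℝ} (hc : 0 < c) (x : Fin n → ℝ) :
    conePhi K (c • x) ≤ c * conePhi K x := by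
  have hdiv : conePhi K (c • x) / c ≤ conePhi K x := by
    apply le_infDist'' hK.negK_nonempty
    intro y hy
    rw [Set.mem_neg] at hy
    have hcy : -(c • -y) ∈ -K := by
      rw [Set.mem_neg, neg_neg]; exact hK.2.2.1 c hc.le _ hy
    have h1 : conePhi K (c • x) ≤ dist (c • x) (-(c • -y)) :=
      Metric.infDist_le_dist_of_mem hcy
    have h2 : dist (c • x) (-(c • -y)) = c * dist x y := by
      rw [dist_eq_norm, dist_eq_norm]
      have : c • x - -(c • -y) = c • (x - y) := by
        rw [smul_neg, neg_neg, smul_sub]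
      rw [this, norm_smul, Real.norm_eq_abs, abs_of_pos hc]
    rw [div_le_iff₀ hc]
    calc conePhi K (c • x) ≤ c * dist x y := h2 ▸ h1
      _ = dist x y * c := mul_comm _ _
  calc conePhi K (c • x) = c * (conePhi K (c • x) / c) := by field_simp
    _ ≤ c * conePhi K x := by nlinarith [hdiv, hc]

lemma IsProperCone.norm_le_conePhi (hK : IsProperCone K) :
    ∃ ε : ℝ, 0 < ε ∧ ∀ w ∈ K, ε * ‖w‖ ≤ conePhi K w := by
  classical
  obtain ⟨hcl, hcv, hsc, hint, hline⟩ := hK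
  set Sph := K ∩ Metric.sphere (0 : Fin n → ℝ) 1 with hSph
  have key : ∀ ε : ℝ, 0 < ε → (∀ u ∈ Sph, ε ≤ conePhi K u) →
      ∀ w ∈ K, ε * ‖w‖ ≤ conePhi K w := by
    intro ε hε hSu w hw
    rcases eq_or_ne w 0 with rfl | hw0
    · simp [conePhi_nonneg]
    · have hnw : (0:ℝ) < ‖w‖ := norm_pos_iff.2 hw0
      set u := ‖w‖⁻¹ • w with hu
      have huK : u ∈ K := hsc _ (by positivity) _ hw
      have hun : ‖u‖ = 1 := by
        rw [hu, norm_smul, Real.norm_eq_abs, abs_of_pos (by positivity)]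
        field_simp
      have huS : u ∈ Sph := ⟨huK, by simpa [mem_sphere_iff_norm] using hun⟩
      have h1 : ε ≤ conePhi K u := hSu u huS
      have h2 : conePhi K u ≤ ‖w‖⁻¹ * conePhi K w := by
        have := IsProperCone.conePhi_smul_le ⟨hcl, hcv, hsc, hint, hline⟩
          (c := ‖w‖⁻¹) (by positivity) w
        rwa [← hu] at this
      have h5 := h1.trans h2
      have h4 := mul_le_mul_of_nonneg_right h5 hnw.le
      calc ε * ‖w‖ ≤ ‖w‖⁻¹ * conePhi K w * ‖w‖ := h4
        _ = conePhi K w := by field_simp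
  rcases Sph.eq_empty_or_nonempty with hemp | hne
  · exact ⟨1, one_pos, key 1 one_pos fun u hu => by
      rw [hemp] at hu; exact absurd hu (Set.notMem_empty u)⟩
  · have hScomp : IsCompact Sph := (isCompact_sphere 0 1).inter_left hcl
    have hcont : ContinuousOn (conePhi K) Sph :=
      (Metric.continuous_infDist_pt (-K)).continuousOn
    obtain ⟨u₀, hu₀S, hmin⟩ := hScomp.exists_isMinOn hne hcont
    have hu₀pos : 0 < conePhi K u₀ := by
      have hu₀K : u₀ ∈ K := hu₀S.1
      have hu₀n : ‖u₀‖ = 1 := by simpa [mem_sphere_iff_norm] using hu₀S.2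
      have hu₀0 : u₀ ≠ 0 := by intro h; rw [h] at hu₀n; simp at hu₀n
      have hnotmem : u₀ ∉ -K := by
        intro hmem
        have : u₀ ∈ K ∩ (-K) := ⟨hu₀K, hmem⟩
        rw [hline] at this
        exact hu₀0 this
      exact (IsClosed.notMem_iff_infDist_pos hcl.neg
        (IsProperCone.negK_nonempty ⟨hcl, hcv, hsc, hint, hline⟩)).1 hnotmem
    exact ⟨conePhi K u₀, hu₀pos, key _ hu₀pos fun u hu => hmin hu⟩


/-- Key bound: for cone-invariant `B`, `‖B‖ ≤ C·φ(Be)`; and `φ(Be) ≤ φ((B+D)e) ≤ ‖f‖·‖B+D‖`. -/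
lemma cone_bound (hK : IsProperCone K) :
    ∃ C : ℝ, 1 ≤ C ∧ ∀ B D : Matrix (Fin n) (Fin n) ℝ, LeavesInvariant B K →
      LeavesInvariant D K → l2OpNorm B ≤ C * l2OpNorm (B + D) := by
  classical
  obtain ⟨e, he⟩ := hK.2.2.2.1
  have heK : e ∈ K := interior_subset he
  obtain ⟨r, hr, hball⟩ : ∃ r > 0, Metric.ball e r ⊆ K := by
    rw [mem_interior_iff_mem_nhds, Metric.mem_nhds_iff] at he
    exact he
  obtain ⟨ε, hε, hephi⟩ := hK.norm_le_conePhi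
  set r' : ℝ := r / 2 with hr'
  have hr'pos : 0 < r' := by positivity
  set M : ℝ := ‖e‖ + r' with hM
  have hMpos : 0 < M := by positivity
  set c : ℝ := 2 * M / r with hc
  have hcpos : 0 < c := by positivity
  -- cone domination: w ∈ K, ‖w‖ ≤ M ⇒ c•e - w ∈ K
  have hdom : ∀ w ∈ K, ‖w‖ ≤ M → c • e - w ∈ K := by
    intro w hw hwM
    have h1 : e - c⁻¹ • w ∈ Metric.ball e r := by
      rw [Metric.mem_ball, dist_eq_norm]
      have : e - (e - c⁻¹ • w) = c⁻¹ • w := by abel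
      rw [show e - c⁻¹ • w - e = -(c⁻¹ • w) by abel, norm_neg, norm_smul,
        Real.norm_eq_abs, abs_of_pos (by positivity)]
      have hcinv : c⁻¹ = r / (2 * M) := by rw [hc]; field_simp
      rw [hcinv]
      calc r / (2 * M) * ‖w‖ ≤ r / (2 * M) * M := by
            apply mul_le_mul_of_nonneg_left hwM (by positivity)
        _ = r / 2 := by field_simp
        _ < r := by linarith
    have h2 : e - c⁻¹ • w ∈ K := hball h1
    have h3 : c • (e - c⁻¹ • w) ∈ K := hK.2.2.1 c hcpos.le _ h2
    have h4 : c • (e - c⁻¹ • w) = c • e - w := by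
      rw [smul_sub, smul_smul, mul_inv_cancel₀ hcpos.ne', one_smul]
    rwa [h4] at h3
  -- φ(B w) ≤ c φ(B e) for w ∈ K with ‖w‖ ≤ M
  have hphidom : ∀ (B : Matrix (Fin n) (Fin n) ℝ), LeavesInvariant B K →
      ∀ w ∈ K, ‖w‖ ≤ M → conePhi K (B.mulVec w) ≤ c * conePhi K (B.mulVec e) := by
    intro B hB w hw hwM
    have hk0 : B.mulVec (c • e - w) ∈ K := hB _ (hdom w hw hwM)
    have heq : B.mulVec w + B.mulVec (c • e - w) = c • B.mulVec e := by
      rw [Matrix.mulVec_sub, Matrix.mulVec_smul]; abel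
    calc conePhi K (B.mulVec w)
        ≤ conePhi K (B.mulVec w + B.mulVec (c • e - w)) := hK.conePhi_add_le _ hk0
      _ = conePhi K (c • B.mulVec e) := by rw [heq]
      _ ≤ c * conePhi K (B.mulVec e) := hK.conePhi_smul_le hcpos _
  set C₁ : ℝ := (1 / r') * ε⁻¹ * (c + 1) with hC₁
  have hC₁pos : 0 < C₁ := by positivity
  -- the sup-norm bound
  have hsup : ∀ (B : Matrix (Fin n) (Fin n) ℝ), LeavesInvariant B K →
      ∀ x : Fin n → ℝ, ‖B.mulVec x‖ ≤ C₁ * conePhi K (B.mulVec e) * ‖x‖ := by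
    intro B hB x
    have hmain : ∀ y : Fin n → ℝ, ‖y‖ ≤ 1 → ‖B.mulVec y‖ ≤ C₁ * conePhi K (B.mulVec e) := by
      intro y hy
      have hw : e + r' • y ∈ K := by
        apply hball
        rw [Metric.mem_ball, dist_eq_norm, show e + r' • y - e = r' • y by abel,
          norm_smul, Real.norm_eq_abs, abs_of_pos hr'pos]
        calc r' * ‖y‖ ≤ r' * 1 := mul_le_mul_of_nonneg_left hy hr'pos.le
          _ < r := by rw [hr']; linarith
      have hwM : ‖e + r' • y‖ ≤ M := by
        calc ‖e + r' • y‖ ≤ ‖e‖ + ‖r' • y‖ := norm_add_le _ _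
          _ ≤ ‖e‖ + r' := by
              rw [norm_smul, Real.norm_eq_abs, abs_of_pos hr'pos]
              nlinarith
      have heM : ‖e‖ ≤ M := by rw [hM]; linarith
      have hdecomp : B.mulVec y = (1 / r') • (B.mulVec (e + r' • y) - B.mulVec e) := by
        have : B.mulVec (e + r' • y) - B.mulVec e = r' • B.mulVec y := by
          rw [Matrix.mulVec_add, Matrix.mulVec_smul]; abel
        rw [this, smul_smul]
        rw [show (1 / r') * r' = 1 by field_simp, one_smul]
      have hb1 : ‖B.mulVec (e + r' • y)‖ ≤ ε⁻¹ * (c * conePhi K (B.mulVec e)) := by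
        have h1 : ε * ‖B.mulVec (e + r' • y)‖ ≤ conePhi K (B.mulVec (e + r' • y)) :=
          hephi _ (hB _ hw)
        have h2 := hphidom B hB _ hw hwM
        rw [← le_div_iff₀' hε] at h1
        calc ‖B.mulVec (e + r' • y)‖ ≤ conePhi K (B.mulVec (e + r' • y)) / ε := h1
          _ ≤ c * conePhi K (B.mulVec e) / ε := by gcongr
          _ = ε⁻¹ * (c * conePhi K (B.mulVec e)) := by field_simp
      have hb2 : ‖B.mulVec e‖ ≤ ε⁻¹ * conePhi K (B.mulVec e) := by
        have h1 : ε * ‖B.mulVec e‖ ≤ conePhi K (B.mulVec e) := hephi _ (hB _ heK)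
        rw [← le_div_iff₀' hε] at h1
        calc ‖B.mulVec e‖ ≤ conePhi K (B.mulVec e) / ε := h1
          _ = ε⁻¹ * conePhi K (B.mulVec e) := by field_simp
      calc ‖B.mulVec y‖ = ‖(1 / r') • (B.mulVec (e + r' • y) - B.mulVec e)‖ := by
            rw [← hdecomp]
        _ = (1 / r') * ‖B.mulVec (e + r' • y) - B.mulVec e‖ := by
            rw [norm_smul, Real.norm_eq_abs, abs_of_pos (by positivity)]
        _ ≤ (1 / r') * (‖B.mulVec (e + r' • y)‖ + ‖B.mulVec e‖) := by
            apply mul_le_mul_of_nonneg_left (norm_sub_le _ _) (by positivity)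
        _ ≤ (1 / r') * (ε⁻¹ * (c * conePhi K (B.mulVec e)) + ε⁻¹ * conePhi K (B.mulVec e)) := by
            apply mul_le_mul_of_nonneg_left (add_le_add hb1 hb2) (by positivity)
        _ = C₁ * conePhi K (B.mulVec e) := by rw [hC₁]; ring
    rcases eq_or_ne x 0 with rfl | hx0
    · simp [Matrix.mulVec_zero]
    · have hnx : (0:ℝ) < ‖x‖ := norm_pos_iff.2 hx0
      have := hmain (‖x‖⁻¹ • x) (by

        rw [norm_smul, Real.norm_eq_abs, abs_of_pos (by positivity)]
        field_simp; exact le_rfl)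
      have heq : B.mulVec x = ‖x‖ • B.mulVec (‖x‖⁻¹ • x) := by
        rw [Matrix.mulVec_smul, smul_smul, mul_inv_cancel₀ hnx.ne', one_smul]
      rw [heq, norm_smul, Real.norm_eq_abs, abs_of_pos hnx, mul_comm (C₁ * _) ‖x‖]
      exact mul_le_mul_of_nonneg_left this hnx.le
  -- convert to the ℓ² operator norm
  have hopB : ∀ B : Matrix (Fin n) (Fin n) ℝ, LeavesInvariant B K →
      l2OpNorm B ≤ (Real.sqrt n * C₁) * conePhi K (B.mulVec e) := by
    intro B hB
    show ‖Matrix.toEuclideanCLM (𝕜 := ℝ) B‖ ≤ _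
    apply ContinuousLinearMap.opNorm_le_bound _
      (mul_nonneg (by positivity) (conePhi_nonneg _ _))
    intro x
    set x' : Fin n → ℝ := WithLp.equiv 2 _ x with hx'
    have hxx : x = (WithLp.equiv 2 (Fin n → ℝ)).symm x' := (Equiv.symm_apply_apply _ _).symm
    have happ : Matrix.toEuclideanCLM (𝕜 := ℝ) B x
        = (WithLp.equiv 2 (Fin n → ℝ)).symm (B.mulVec x') := by
      rw [hxx, WithLp.equiv_symm_apply, Matrix.toEuclideanCLM_toLp]
    have hx'le : ‖x'‖ ≤ ‖x‖ := by
      calc ‖x'‖ ≤ ‖(WithLp.equiv 2 (Fin n → ℝ)).symm x'‖ := pi_norm_le_euclidean _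
        _ = ‖x‖ := by rw [← hxx]
    rw [happ]
    calc ‖(WithLp.equiv 2 (Fin n → ℝ)).symm (B.mulVec x')‖
        ≤ Real.sqrt n * ‖B.mulVec x'‖ := euclidean_norm_le _
      _ ≤ Real.sqrt n * (C₁ * conePhi K (B.mulVec e) * ‖x'‖) :=
          mul_le_mul_of_nonneg_left (hsup B hB x') (Real.sqrt_nonneg _)
      _ ≤ Real.sqrt n * (C₁ * conePhi K (B.mulVec e) * ‖x‖) := by
          apply mul_le_mul_of_nonneg_left ?_ (Real.sqrt_nonneg _)
          exact mul_le_mul_of_nonneg_left hx'le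
            (mul_nonneg hC₁pos.le (conePhi_nonneg _ _))
      _ = (Real.sqrt n * C₁) * conePhi K (B.mulVec e) * ‖x‖ := by ring
  -- φ((B+D)e) is controlled by the operator norm of B+D
  have hphile : ∀ E : Matrix (Fin n) (Fin n) ℝ,
      conePhi K (E.mulVec e) ≤ l2OpNorm E * (Real.sqrt n * ‖e‖) := by
    intro E
    set ehat : EuclideanSpace ℝ (Fin n) := (WithLp.equiv 2 (Fin n → ℝ)).symm e with hehat
    have happ : Matrix.toEuclideanCLM (𝕜 := ℝ) E ehat
        = (WithLp.equiv 2 (Fin n → ℝ)).symm (E.mulVec e) := by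
      rw [hehat, WithLp.equiv_symm_apply, Matrix.toEuclideanCLM_toLp]
    calc conePhi K (E.mulVec e) ≤ ‖E.mulVec e‖ := hK.conePhi_le_norm _
      _ ≤ ‖(WithLp.equiv 2 (Fin n → ℝ)).symm (E.mulVec e)‖ := pi_norm_le_euclidean _
      _ = ‖Matrix.toEuclideanCLM (𝕜 := ℝ) E ehat‖ := by rw [happ]
      _ ≤ l2OpNorm E * ‖ehat‖ := ContinuousLinearMap.le_opNorm _ _
      _ ≤ l2OpNorm E * (Real.sqrt n * ‖e‖) :=
          mul_le_mul_of_nonneg_left (euclidean_norm_le e) (norm_nonneg _)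
  refine ⟨max 1 ((Real.sqrt n * C₁) * (Real.sqrt n * ‖e‖)), le_max_left _ _, ?_⟩
  intro B D hB hD
  have hmono : conePhi K (B.mulVec e) ≤ conePhi K ((B + D).mulVec e) := by
    rw [Matrix.add_mulVec]
    exact hK.conePhi_add_le _ (hD _ heK)
  calc l2OpNorm B ≤ (Real.sqrt n * C₁) * conePhi K (B.mulVec e) := hopB B hB
    _ ≤ (Real.sqrt n * C₁) * conePhi K ((B + D).mulVec e) :=
        mul_le_mul_of_nonneg_left hmono (by positivity)
    _ ≤ (Real.sqrt n * C₁) * (l2OpNorm (B + D) * (Real.sqrt n * ‖e‖)) :=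
        mul_le_mul_of_nonneg_left (hphile _) (by positivity)
    _ = ((Real.sqrt n * C₁) * (Real.sqrt n * ‖e‖)) * l2OpNorm (B + D) := by ring
    _ ≤ max 1 ((Real.sqrt n * C₁) * (Real.sqrt n * ‖e‖)) * l2OpNorm (B + D) :=
        mul_le_mul_of_nonneg_right (le_max_right _ _) (norm_nonneg _)


section words

variable {n m : ℕ} {K : Set (Fin n → ℝ)}

lemma wordProd_zero (A : Fin m → Matrix (Fin n) (Fin n) ℝ) (σ : Fin 0 → Fin m) :
    wordProd A σ = 1 := by simp [wordProd]

lemma wordProd_succ {k : ℕ} (A : Fin m → Matrix (Fin n) (Fin n) ℝ)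
    (σ : Fin (k + 1) → Fin m) :
    wordProd A σ = wordProd A (fun i => σ i.succ) * A (σ 0) := by
  unfold wordProd
  rw [List.ofFn_succ, List.reverse_cons, List.prod_append]
  simp

lemma sum_wordProd (A : Fin m → Matrix (Fin n) (Fin n) ℝ) (k : ℕ) :
    ∑ σ : Fin k → Fin m, wordProd A σ = (∑ i, A i) ^ k := by
  induction k with
  | zero =>
    rw [pow_zero]
    haveI : Unique (Fin 0 → Fin m) :=
      ⟨⟨fun i => i.elim0⟩, fun σ => funext fun i => i.elim0⟩
    rw [Fintype.sum_unique (wordProd A)]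
    exact wordProd_zero A _
  | succ k ih =>
    rw [pow_succ, ← ih]
    have he := Fin.consEquiv (fun _ : Fin (k+1) => Fin m)
    rw [← Fintype.sum_equiv (Fin.consEquiv (fun _ : Fin (k+1) => Fin m))
      (fun p => wordProd A ((Fin.consEquiv _) p)) (wordProd A) (fun p => rfl)]
    rw [Fintype.sum_prod_type]
    have hterm : ∀ (a : Fin m) (τ : Fin k → Fin m),
        wordProd A ((Fin.consEquiv (fun _ : Fin (k+1) => Fin m)) (a, τ))
          = wordProd A τ * A a := by
      intro a τ
      rw [show ((Fin.consEquiv (fun _ : Fin (k+1) => Fin m)) (a, τ)) = Fin.cons a τ from rfl]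
      rw [wordProd_succ]
      simp [Fin.cons_succ, Fin.cons_zero]
    calc ∑ a : Fin m, ∑ τ : Fin k → Fin m,
          wordProd A ((Fin.consEquiv (fun _ : Fin (k+1) => Fin m)) (a, τ))
        = ∑ a : Fin m, ∑ τ : Fin k → Fin m, wordProd A τ * A a := by
          refine Finset.sum_congr rfl fun a _ => Finset.sum_congr rfl fun τ _ => hterm a τ
      _ = ∑ a : Fin m, (∑ τ : Fin k → Fin m, wordProd A τ) * A a := by
          refine Finset.sum_congr rfl fun a _ => (Finset.sum_mul _ _ _).symm
      _ = (∑ τ : Fin k → Fin m, wordProd A τ) * ∑ a, A a := by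
          rw [Finset.mul_sum]

lemma LeavesInvariant.mul {B C : Matrix (Fin n) (Fin n) ℝ}
    (hB : LeavesInvariant B K) (hC : LeavesInvariant C K) :
    LeavesInvariant (B * C) K := fun v hv => by
  rw [← Matrix.mulVec_mulVec]; exact hB _ (hC _ hv)

lemma leavesInvariant_one (hK : IsProperCone K) :
    LeavesInvariant (1 : Matrix (Fin n) (Fin n) ℝ) K := fun v hv => by
  rwa [Matrix.one_mulVec]

lemma leavesInvariant_sum (hK : IsProperCone K) {α : Type*} (s : Finset α)
    (f : α → Matrix (Fin n) (Fin n) ℝ) (h : ∀ a ∈ s, LeavesInvariant (f a) K) :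
    LeavesInvariant (∑ a ∈ s, f a) K := by
  intro v hv
  classical
  induction s using Finset.induction with
  | empty => simpa [Matrix.zero_mulVec] using hK.zero_mem
  | insert a s hnotmem ih =>
    rw [Finset.sum_insert hnotmem, Matrix.add_mulVec]
    exact hK.add_mem (h _ (Finset.mem_insert_self _ _) _ hv)
      (ih fun a ha => h a (Finset.mem_insert_of_mem ha))

lemma leavesInvariant_wordProd (hK : IsProperCone K)
    (A : Fin m → Matrix (Fin n) (Fin n) ℝ) (hA : ∀ i, LeavesInvariant (A i) K)
    {k : ℕ} (σ : Fin k → Fin m) : LeavesInvariant (wordProd A σ) K := by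
  induction k with
  | zero => rw [wordProd_zero]; exact leavesInvariant_one hK
  | succ k ih => rw [wordProd_succ]; exact (ih _).mul (hA _)

end words

lemma rpow_pow_one_div {x : ℝ} (hx : 0 ≤ x) {k : ℕ} (hk : k ≠ 0) :
    (x ^ k) ^ ((1 : ℝ) / (k : ℝ)) = x := by
  rw [← Real.rpow_natCast x k, ← Real.rpow_mul hx, mul_one_div,
    div_self (by exact_mod_cast hk : (k : ℝ) ≠ 0), Real.rpow_one]

/-- For matrices leaving a common proper cone invariant,
`(1/m) ρ(∑ᵢ Aᵢ) ≤ ρ(A₁, …, Aₘ) ≤ ρ(∑ᵢ Aᵢ)`. -/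
theorem jsr_bounds_of_cone_invariant {n m : ℕ} (hm : 0 < m)
    (A : Fin m → Matrix (Fin n) (Fin n) ℝ)
    (K : Set (Fin n → ℝ)) (hK : IsProperCone K)
    (hinv : ∀ i, LeavesInvariant (A i) K) :
    (1 / (m : ℝ)) * specRad (∑ i, A i) ≤ jsr A ∧
      jsr A ≤ specRad (∑ i, A i) := by
  classical
  haveI : Nonempty (Fin m) := ⟨⟨0, hm⟩⟩
  set S : Matrix (Fin n) (Fin n) ℝ := ∑ i, A i with hS
  set a : ℕ → ℝ := fun k => l2OpNorm (S ^ k) ^ ((1 : ℝ) / (k : ℝ)) with ha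
  set b : ℕ → ℝ := fun k =>
    ⨆ σ : Fin k → Fin m, l2OpNorm (wordProd A σ) ^ ((1 : ℝ) / (k : ℝ)) with hb
  have hjsr : jsr A = Filter.atTop.limsup b := rfl
  have hspec : specRad S = Filter.atTop.limsup a := rfl
  set M : ℝ := max 1 (∑ i, l2OpNorm (A i)) with hM
  have hM1 : (1 : ℝ) ≤ M := le_max_left _ _
  have hM0 : (0 : ℝ) < M := lt_of_lt_of_le one_pos hM1
  have hAi : ∀ i, l2OpNorm (A i) ≤ M := fun i =>
    le_trans (Finset.single_le_sum (fun j _ => l2OpNorm_nonneg _) (Finset.mem_univ i))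
      (le_max_right _ _)
  have hSM : l2OpNorm S ≤ M :=
    le_trans (l2OpNorm_sum_le Finset.univ A) (le_max_right _ _)
  have hone : l2OpNorm (1 : Matrix (Fin n) (Fin n) ℝ) ≤ 1 := by
    unfold l2OpNorm
    rw [map_one]
    exact ContinuousLinearMap.norm_id_le
  have hword : ∀ (k : ℕ) (σ : Fin k → Fin m), l2OpNorm (wordProd A σ) ≤ M ^ k := by
    intro k
    induction k with
    | zero => intro σ; rw [wordProd_zero, pow_zero]; exact hone
    | succ k ih =>
      intro σ
      rw [wordProd_succ, pow_succ]
      calc l2OpNorm (wordProd A (fun i => σ i.succ) * A (σ 0))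
          ≤ l2OpNorm (wordProd A (fun i => σ i.succ)) * l2OpNorm (A (σ 0)) :=
            l2OpNorm_mul_le _ _
        _ ≤ M ^ k * M := mul_le_mul (ih _) (hAi _) (l2OpNorm_nonneg _)
            (by positivity)
  have hpow : ∀ k : ℕ, l2OpNorm (S ^ k) ≤ M ^ k := by
    intro k
    induction k with
    | zero => rw [pow_zero, pow_zero]; exact hone
    | succ k ih =>
      rw [pow_succ, pow_succ]
      exact le_trans (l2OpNorm_mul_le _ _)
        (mul_le_mul ih hSM (l2OpNorm_nonneg _) (by positivity))
  have ha0 : ∀ k, 0 ≤ a k := fun k => Real.rpow_nonneg (l2OpNorm_nonneg _) _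
  have hbdd : ∀ k : ℕ, BddAbove (Set.range fun σ : Fin k → Fin m =>
      l2OpNorm (wordProd A σ) ^ ((1 : ℝ) / (k : ℝ))) := fun k =>
    Set.Finite.bddAbove (Set.finite_range _)
  have hb0 : ∀ k, 0 ≤ b k := by
    intro k
    exact le_trans (Real.rpow_nonneg (l2OpNorm_nonneg _) _)
      (le_ciSup (hbdd k) (Classical.arbitrary _))
  have haM : ∀ k : ℕ, 1 ≤ k → a k ≤ M := by
    intro k hk
    calc a k ≤ (M ^ k) ^ ((1 : ℝ) / (k : ℝ)) :=
          Real.rpow_le_rpow (l2OpNorm_nonneg _) (hpow k) (by positivity)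
      _ = M := rpow_pow_one_div hM0.le (by omega)
  have hbM : ∀ k : ℕ, 1 ≤ k → b k ≤ M := by
    intro k hk
    apply ciSup_le
    intro σ
    calc l2OpNorm (wordProd A σ) ^ ((1 : ℝ) / (k : ℝ))
        ≤ (M ^ k) ^ ((1 : ℝ) / (k : ℝ)) :=
          Real.rpow_le_rpow (l2OpNorm_nonneg _) (hword k σ) (by positivity)
      _ = M := rpow_pow_one_div hM0.le (by omega)
  -- the maximizing word
  have hmax : ∀ k : ℕ, ∃ σstar : Fin k → Fin m,
      (∀ σ : Fin k → Fin m, l2OpNorm (wordProd A σ) ≤ l2OpNorm (wordProd A σstar)) ∧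
      b k = l2OpNorm (wordProd A σstar) ^ ((1 : ℝ) / (k : ℝ)) := by
    intro k
    obtain ⟨σstar, hσ⟩ := Finite.exists_max fun σ : Fin k → Fin m => l2OpNorm (wordProd A σ)
    refine ⟨σstar, hσ, le_antisymm ?_ (le_ciSup (hbdd k) σstar)⟩
    exact ciSup_le fun σ => Real.rpow_le_rpow (l2OpNorm_nonneg _) (hσ σ) (by positivity)
  -- pointwise lower bound
  have hlow : ∀ k : ℕ, 1 ≤ k → (1 / (m : ℝ)) * a k ≤ b k := by
    intro k hk
    obtain ⟨σstar, hσs, hbk⟩ := hmax k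
    have hsum : l2OpNorm (S ^ k) ≤ (m : ℝ) ^ k * l2OpNorm (wordProd A σstar) := by
      rw [hS, ← sum_wordProd A k]
      calc l2OpNorm (∑ σ : Fin k → Fin m, wordProd A σ)
          ≤ ∑ σ : Fin k → Fin m, l2OpNorm (wordProd A σ) := l2OpNorm_sum_le _ _
        _ ≤ ∑ _σ : Fin k → Fin m, l2OpNorm (wordProd A σstar) :=
            Finset.sum_le_sum fun σ _ => hσs σ
        _ = (m : ℝ) ^ k * l2OpNorm (wordProd A σstar) := by
            rw [Finset.sum_const, Finset.card_univ]
            simp [nsmul_eq_mul]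
    have hak : a k ≤ (m : ℝ) * b k := by
      calc a k ≤ ((m : ℝ) ^ k * l2OpNorm (wordProd A σstar)) ^ ((1 : ℝ) / (k : ℝ)) :=
            Real.rpow_le_rpow (l2OpNorm_nonneg _) hsum (by positivity)
        _ = ((m : ℝ) ^ k) ^ ((1 : ℝ) / (k : ℝ)) *
              l2OpNorm (wordProd A σstar) ^ ((1 : ℝ) / (k : ℝ)) :=
            Real.mul_rpow (by positivity) (l2OpNorm_nonneg _)
        _ = (m : ℝ) * b k := by
            rw [rpow_pow_one_div (by positivity) (by omega), hbk]
    have hmpos : (0 : ℝ) < m := by exact_mod_cast hm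
    calc (1 / (m : ℝ)) * a k ≤ (1 / (m : ℝ)) * ((m : ℝ) * b k) :=
          mul_le_mul_of_nonneg_left hak (by positivity)
      _ = b k := by field_simp
  -- pointwise upper bound
  obtain ⟨C, hC1, hCb⟩ := cone_bound hK
  have hC0 : (0 : ℝ) < C := lt_of_lt_of_le one_pos hC1
  have hup : ∀ k : ℕ, 1 ≤ k → b k ≤ C ^ ((1 : ℝ) / (k : ℝ)) * a k := by
    intro k hk
    obtain ⟨σstar, hσs, hbk⟩ := hmax k
    have hBinv : LeavesInvariant (wordProd A σstar) K :=
      leavesInvariant_wordProd hK A hinv σstar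
    have hDinv : LeavesInvariant (S ^ k - wordProd A σstar) K := by
      have hsplit : S ^ k - wordProd A σstar
          = ∑ τ ∈ Finset.univ.erase σstar, wordProd A τ := by
        have := Finset.add_sum_erase Finset.univ (wordProd A) (Finset.mem_univ σstar)
        rw [hS, ← sum_wordProd A k, ← this]
        abel
      rw [hsplit]
      exact leavesInvariant_sum hK _ _ fun τ _ => leavesInvariant_wordProd hK A hinv τ
    have hkey : l2OpNorm (wordProd A σstar) ≤ C * l2OpNorm (S ^ k) := by
      have := hCb (wordProd A σstar) (S ^ k - wordProd A σstar) hBinv hDinv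
      rwa [add_sub_cancel] at this
    calc b k = l2OpNorm (wordProd A σstar) ^ ((1 : ℝ) / (k : ℝ)) := hbk
      _ ≤ (C * l2OpNorm (S ^ k)) ^ ((1 : ℝ) / (k : ℝ)) :=
          Real.rpow_le_rpow (l2OpNorm_nonneg _) hkey (by positivity)
      _ = C ^ ((1 : ℝ) / (k : ℝ)) * a k := Real.mul_rpow hC0.le (l2OpNorm_nonneg _)
  -- limsup bookkeeping
  have heva0 : ∀ᶠ k in atTop, 0 ≤ a k := Eventually.of_forall ha0
  have hevb0 : ∀ᶠ k in atTop, 0 ≤ b k := Eventually.of_forall hb0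
  have hevaM : ∀ᶠ k in atTop, a k ≤ M := (eventually_ge_atTop 1).mono haM
  have hevbM : ∀ᶠ k in atTop, b k ≤ M := (eventually_ge_atTop 1).mono hbM
  have hcb_a : IsCoboundedUnder (· ≤ ·) atTop a :=
    isCoboundedUnder_le_of_eventually_le atTop heva0
  have hcb_b : IsCoboundedUnder (· ≤ ·) atTop b :=
    isCoboundedUnder_le_of_eventually_le atTop hevb0
  have hbd_a : IsBoundedUnder (· ≤ ·) atTop a := isBoundedUnder_of_eventually_le hevaM
  have hbd_b : IsBoundedUnder (· ≤ ·) atTop b := isBoundedUnder_of_eventually_le hevbM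
  have hLa0 : 0 ≤ Filter.atTop.limsup a :=
    le_limsup_of_frequently_le heva0.frequently hbd_a
  have hLaM : Filter.atTop.limsup a ≤ M := limsup_le_of_le hcb_a hevaM
  constructor
  · -- lower bound
    rw [hjsr, hspec, ← limsup_const_mul' (1 / (m : ℝ)) (by positivity) a M heva0 hevaM]
    exact limsup_le_limsup ((eventually_ge_atTop 1).mono hlow)
      (isCoboundedUnder_le_of_eventually_le atTop
        (Eventually.of_forall fun k => mul_nonneg (by positivity) (ha0 k))) hbd_b
  · -- upper bound
    rw [hjsr, hspec]
    have key : ∀ ε : ℝ, 0 < ε → Filter.atTop.limsup b ≤ Filter.atTop.limsup a + ε := by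
      intro ε hε
      set ε' : ℝ := ε / (M + 1) with hε'
      have hε'0 : 0 < ε' := by positivity
      have htend : Tendsto (fun k : ℕ => C ^ ((1 : ℝ) / (k : ℝ))) atTop (nhds 1) := by
        have h1 : Tendsto (fun k : ℕ => Real.log C * ((1 : ℝ) / (k : ℝ))) atTop (nhds 0) := by
          simpa using (tendsto_one_div_atTop_nhds_zero_nat).const_mul (Real.log C)
        have h2 : Tendsto (fun k : ℕ => Real.exp (Real.log C * ((1 : ℝ) / (k : ℝ))))
            atTop (nhds 1) := by
          simpa [Function.comp_def] using (Real.continuous_exp.tendsto 0).comp h1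
        refine h2.congr fun k => ?_
        rw [Real.rpow_def_of_pos hC0]
      have hCe : ∀ᶠ k : ℕ in atTop, C ^ ((1 : ℝ) / (k : ℝ)) ≤ 1 + ε' :=
        htend.eventually (eventually_le_nhds (by linarith))
      have hbe : ∀ᶠ k in atTop, b k ≤ (1 + ε') * a k := by
        filter_upwards [hCe, eventually_ge_atTop 1] with k hk1 hk2
        calc b k ≤ C ^ ((1 : ℝ) / (k : ℝ)) * a k := hup k hk2
          _ ≤ (1 + ε') * a k := mul_le_mul_of_nonneg_right hk1 (ha0 k)
      have h3 : Filter.atTop.limsup b ≤ Filter.atTop.limsup (fun k => (1 + ε') * a k) :=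
        limsup_le_limsup hbe hcb_b (isBoundedUnder_of_eventually_le
          (a := (1 + ε') * M) (hevaM.mono fun k hk => by nlinarith [ha0 k]))
      rw [limsup_const_mul' (1 + ε') (by linarith) a M heva0 hevaM] at h3
      have hfin : (1 + ε') * Filter.atTop.limsup a ≤ Filter.atTop.limsup a + ε := by
        have h4 : ε' * Filter.atTop.limsup a ≤ ε' * M := by nlinarith
        have h5 : ε' * M ≤ ε := by
          rw [hε']
          rw [div_mul_eq_mul_div, div_le_iff₀ (by linarith)]
          nlinarith
        nlinarith
      linarith
    have := le_of_forall_pos_le_add key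
    exact this
end

section
/- Let A₁,…,Aₘ be real n×n matrices and let l ≥ 1. Then ρ(A₁^{⊗l},…,Aₘ^{⊗l}) = ρ(A₁,…,Aₘ)^l, i.e., the joint spectral radius of the set of l-th Kronecker powers equals the l-th power of the joint spectral radius of the original set. -/
open scoped Kronecker

/-- The `k`-th Kronecker power of a square matrix. -/
noncomputable def kronPow {n : ℕ} (A : Matrix (Fin n) (Fin n) ℝ) :
    (k : ℕ) → Matrix (Fin (n ^ k)) (Fin (n ^ k)) ℝ
  | 0 => 1
  | k + 1 =>
    Matrix.reindex (finProdFinEquiv.trans (finCongr (pow_succ n k).symm))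
      (finProdFinEquiv.trans (finCongr (pow_succ n k).symm))
      ((kronPow A k) ⊗ₖ A)

section Helpers

set_option linter.unusedSectionVars false

open scoped Matrix.Norms.L2Operator
open Matrix

lemma l2OpNorm_eq {ι : Type*} [Fintype ι] [DecidableEq ι] (M : Matrix ι ι ℝ) :
    l2OpNorm M = ‖M‖ := rfl

variable {ι κ : Type*} [Fintype ι] [DecidableEq ι] [Fintype κ] [DecidableEq κ]


lemma euclid_norm_sq (x : ι → ℝ) :
    ‖(WithLp.equiv 2 (ι → ℝ)).symm x‖ ^ 2 = ∑ i, x i ^ 2 := by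
  rw [EuclideanSpace.norm_eq, Real.sq_sqrt (by positivity)]
  simp [sq_abs]

lemma mulVec_norm_le (M : Matrix ι ι ℝ) (x : ι → ℝ) :
    ‖(WithLp.equiv 2 (ι → ℝ)).symm (M *ᵥ x)‖ ≤ ‖M‖ * ‖(WithLp.equiv 2 (ι → ℝ)).symm x‖ :=
  M.l2_opNorm_mulVec ((WithLp.equiv 2 (ι → ℝ)).symm x)

lemma matrix_norm_le_bound (M : Matrix ι ι ℝ) (c : ℝ) (hc : 0 ≤ c)
    (h : ∀ x : ι → ℝ, ‖(WithLp.equiv 2 (ι → ℝ)).symm (M *ᵥ x)‖ ≤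
      c * ‖(WithLp.equiv 2 (ι → ℝ)).symm x‖) : ‖M‖ ≤ c := by
  rw [Matrix.l2_opNorm_def]
  refine ContinuousLinearMap.opNorm_le_bound _ hc fun v => ?_
  calc ‖(Matrix.toEuclideanLin.trans LinearMap.toContinuousLinearMap M) v‖
      = ‖(WithLp.equiv 2 (ι → ℝ)).symm (M *ᵥ (WithLp.equiv 2 (ι → ℝ) v))‖ := rfl
    _ ≤ c * ‖(WithLp.equiv 2 (ι → ℝ)).symm (WithLp.equiv 2 (ι → ℝ) v)‖ := h _
    _ = c * ‖v‖ := by rw [Equiv.symm_apply_apply]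

lemma mulVec_sq_le (M : Matrix ι ι ℝ) (x : ι → ℝ) :
    ∑ i, (M *ᵥ x) i ^ 2 ≤ ‖M‖ ^ 2 * ∑ j, x j ^ 2 := by
  have h := mulVec_norm_le M x
  have h2 := pow_le_pow_left₀ (norm_nonneg _) h 2
  rw [mul_pow, euclid_norm_sq, euclid_norm_sq] at h2
  exact h2

lemma kron_one_mulVec (A : Matrix ι ι ℝ) (w : ι × κ → ℝ) (i : ι) (k : κ) :
    ((A ⊗ₖ (1 : Matrix κ κ ℝ)) *ᵥ w) (i, k) = (A *ᵥ fun j => w (j, k)) i := by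
  simp [Matrix.mulVec, dotProduct, Fintype.sum_prod_type, Matrix.one_apply,
    mul_ite, mul_zero, mul_one, ite_mul, zero_mul, Finset.sum_ite_eq, Finset.sum_ite_eq']

lemma sqrt_style {a c : ℝ} (hc : 0 ≤ c) (h : a ^ 2 ≤ c ^ 2) (ha : 0 ≤ a) : a ≤ c := by
  nlinarith

lemma norm_kron_one_le (A : Matrix ι ι ℝ) :
    ‖A ⊗ₖ (1 : Matrix κ κ ℝ)‖ ≤ ‖A‖ := by
  refine matrix_norm_le_bound _ _ (norm_nonneg _) fun w => ?_
  refine sqrt_style (by positivity) ?_ (norm_nonneg _)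
  rw [mul_pow, euclid_norm_sq, euclid_norm_sq]
  calc ∑ p : ι × κ, ((A ⊗ₖ (1 : Matrix κ κ ℝ)) *ᵥ w) p ^ 2
      = ∑ i, ∑ k, ((A *ᵥ fun j => w (j, k)) i) ^ 2 := by
        rw [Fintype.sum_prod_type]
        exact Finset.sum_congr rfl fun i _ => Finset.sum_congr rfl fun k _ => by
          rw [kron_one_mulVec]
    _ = ∑ k, ∑ i, ((A *ᵥ fun j => w (j, k)) i) ^ 2 := Finset.sum_comm
    _ ≤ ∑ k, ‖A‖ ^ 2 * ∑ j, w (j, k) ^ 2 := by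
        exact Finset.sum_le_sum fun k _ => mulVec_sq_le A _
    _ = ‖A‖ ^ 2 * ∑ p : ι × κ, w p ^ 2 := by
        rw [← Finset.mul_sum, Fintype.sum_prod_type, Finset.sum_comm]

lemma euclid_norm_comp_equiv (e : ι ≃ κ) (u : κ → ℝ) :
    ‖(WithLp.equiv 2 (ι → ℝ)).symm (u ∘ e)‖ = ‖(WithLp.equiv 2 (κ → ℝ)).symm u‖ := by
  refine sqrt_style (norm_nonneg _) ?_ (norm_nonneg _) |>.antisymm
    (sqrt_style (norm_nonneg _) ?_ (norm_nonneg _)) <;>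
  · rw [euclid_norm_sq, euclid_norm_sq]
    rw [← Equiv.sum_comp e (fun k => u k ^ 2)]
    simp [Function.comp]

lemma norm_reindex_le (e : ι ≃ κ) (M : Matrix ι ι ℝ) :
    ‖(Matrix.reindex e e M)‖ ≤ ‖M‖ := by
  refine matrix_norm_le_bound _ _ (norm_nonneg _) fun w => ?_
  have key : (Matrix.reindex e e M) *ᵥ w = (M *ᵥ (w ∘ e)) ∘ e.symm := by
    rw [Matrix.reindex_apply, Matrix.submatrix_mulVec_equiv]
    simp
  rw [key]
  calc ‖(WithLp.equiv 2 (κ → ℝ)).symm ((M *ᵥ (w ∘ e)) ∘ e.symm)‖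
      = ‖(WithLp.equiv 2 (ι → ℝ)).symm (M *ᵥ (w ∘ e))‖ := euclid_norm_comp_equiv e.symm _
    _ ≤ ‖M‖ * ‖(WithLp.equiv 2 (ι → ℝ)).symm (w ∘ e)‖ := mulVec_norm_le M _
    _ = ‖M‖ * ‖(WithLp.equiv 2 (κ → ℝ)).symm w‖ := by rw [euclid_norm_comp_equiv e w]

lemma norm_reindex (e : ι ≃ κ) (M : Matrix ι ι ℝ) :
    ‖(Matrix.reindex e e M)‖ = ‖M‖ := by
  refine le_antisymm (norm_reindex_le e M) ?_
  have : M = Matrix.reindex e.symm e.symm (Matrix.reindex e e M) := by simp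
  conv_lhs => rw [this]
  exact norm_reindex_le e.symm _

lemma one_kron_eq (B : Matrix κ κ ℝ) :
    (1 : Matrix ι ι ℝ) ⊗ₖ B =
      Matrix.reindex (Equiv.prodComm κ ι) (Equiv.prodComm κ ι) (B ⊗ₖ (1 : Matrix ι ι ℝ)) := by
  ext ⟨i, k⟩ ⟨j, l⟩
  simp [mul_comm]

lemma norm_one_kron_le (B : Matrix κ κ ℝ) :
    ‖(1 : Matrix ι ι ℝ) ⊗ₖ B‖ ≤ ‖B‖ := by
  rw [one_kron_eq, norm_reindex]
  exact norm_kron_one_le B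

lemma norm_kron_le (A : Matrix ι ι ℝ) (B : Matrix κ κ ℝ) :
    ‖A ⊗ₖ B‖ ≤ ‖A‖ * ‖B‖ := by
  have : A ⊗ₖ B = (A ⊗ₖ (1 : Matrix κ κ ℝ)) * ((1 : Matrix ι ι ℝ) ⊗ₖ B) := by
    rw [← Matrix.mul_kronecker_mul, mul_one, one_mul]
  rw [this]
  calc ‖_ * _‖ ≤ ‖A ⊗ₖ (1 : Matrix κ κ ℝ)‖ * ‖(1 : Matrix ι ι ℝ) ⊗ₖ B‖ :=
        Matrix.l2_opNorm_mul _ _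
    _ ≤ ‖A‖ * ‖B‖ := mul_le_mul (norm_kron_one_le A) (norm_one_kron_le B)
        (norm_nonneg _) (norm_nonneg _)

lemma euclid_norm_eq_sqrt {α : Type*} [Fintype α] (z : α → ℝ) :
    ‖(WithLp.equiv 2 (α → ℝ)).symm z‖ = Real.sqrt (∑ i, z i ^ 2) := by
  rw [EuclideanSpace.norm_eq]
  congr 1
  exact Finset.sum_congr rfl fun i _ => by simp [sq_abs]

lemma tensor_vec_norm (x : ι → ℝ) (y : κ → ℝ) :
    ‖(WithLp.equiv 2 (ι × κ → ℝ)).symm (fun p => x p.1 * y p.2)‖ =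
      ‖(WithLp.equiv 2 (ι → ℝ)).symm x‖ * ‖(WithLp.equiv 2 (κ → ℝ)).symm y‖ := by
  rw [euclid_norm_eq_sqrt (α := ι × κ) (fun p => x p.1 * y p.2), euclid_norm_eq_sqrt x,
    euclid_norm_eq_sqrt y, ← Real.sqrt_mul (by positivity)]
  congr 1
  rw [Fintype.sum_prod_type, Finset.sum_mul_sum]
  exact Finset.sum_congr rfl fun i _ => Finset.sum_congr rfl fun k _ => by ring

lemma kron_mulVec_tensor (A : Matrix ι ι ℝ) (B : Matrix κ κ ℝ) (x : ι → ℝ) (y : κ → ℝ) :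
    (A ⊗ₖ B) *ᵥ (fun p => x p.1 * y p.2) = fun p => (A *ᵥ x) p.1 * (B *ᵥ y) p.2 := by
  funext ⟨i, k⟩
  simp only [Matrix.mulVec, dotProduct, Fintype.sum_prod_type,
    Matrix.kroneckerMap_apply]
  rw [Finset.sum_mul_sum]
  exact Finset.sum_congr rfl fun j _ => Finset.sum_congr rfl fun l _ => by ring

lemma norm_mul_norm_le_kron (A : Matrix ι ι ℝ) (B : Matrix κ κ ℝ) :
    ‖A‖ * ‖B‖ ≤ ‖A ⊗ₖ B‖ := by
  have h3 : ∀ (x : ι → ℝ) (y : κ → ℝ),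
      ‖(WithLp.equiv 2 (ι → ℝ)).symm (A *ᵥ x)‖ * ‖(WithLp.equiv 2 (κ → ℝ)).symm (B *ᵥ y)‖ ≤
        ‖A ⊗ₖ B‖ * (‖(WithLp.equiv 2 (ι → ℝ)).symm x‖ * ‖(WithLp.equiv 2 (κ → ℝ)).symm y‖) := by
    intro x y
    have := mulVec_norm_le (A ⊗ₖ B) (fun p => x p.1 * y p.2)
    rwa [kron_mulVec_tensor, tensor_vec_norm, tensor_vec_norm] at this
  have h4 : ∀ x : ι → ℝ,
      ‖(WithLp.equiv 2 (ι → ℝ)).symm (A *ᵥ x)‖ * ‖B‖ ≤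
        ‖A ⊗ₖ B‖ * ‖(WithLp.equiv 2 (ι → ℝ)).symm x‖ := by
    intro x
    set c := ‖(WithLp.equiv 2 (ι → ℝ)).symm (A *ᵥ x)‖ with hc
    rcases eq_or_lt_of_le (norm_nonneg ((WithLp.equiv 2 (ι → ℝ)).symm (A *ᵥ x))) with h0 | h0
    · rw [← hc] at h0; rw [← h0, zero_mul]; exact mul_nonneg (norm_nonneg _) (norm_nonneg _)
    · rw [← hc] at h0
      have hB : ‖B‖ ≤ (‖A ⊗ₖ B‖ * ‖(WithLp.equiv 2 (ι → ℝ)).symm x‖) / c := by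
        refine matrix_norm_le_bound _ _ (div_nonneg (mul_nonneg (norm_nonneg _) (norm_nonneg _)) h0.le) fun y => ?_
        rw [div_mul_eq_mul_div, le_div_iff₀ h0]
        calc ‖(WithLp.equiv 2 (κ → ℝ)).symm (B *ᵥ y)‖ * c
            = c * ‖(WithLp.equiv 2 (κ → ℝ)).symm (B *ᵥ y)‖ := mul_comm _ _
          _ ≤ ‖A ⊗ₖ B‖ * (‖(WithLp.equiv 2 (ι → ℝ)).symm x‖ *
                ‖(WithLp.equiv 2 (κ → ℝ)).symm y‖) := h3 x y
          _ = ‖A ⊗ₖ B‖ * ‖(WithLp.equiv 2 (ι → ℝ)).symm x‖ *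
                ‖(WithLp.equiv 2 (κ → ℝ)).symm y‖ := (mul_assoc _ _ _).symm
      calc c * ‖B‖ ≤ c * ((‖A ⊗ₖ B‖ * ‖(WithLp.equiv 2 (ι → ℝ)).symm x‖) / c) :=
            mul_le_mul_of_nonneg_left hB h0.le
        _ = ‖A ⊗ₖ B‖ * ‖(WithLp.equiv 2 (ι → ℝ)).symm x‖ := by
            rw [mul_div_cancel₀ _ (ne_of_gt h0)]
  rcases eq_or_lt_of_le (norm_nonneg B) with h0 | h0
  · rw [← h0, mul_zero]; exact norm_nonneg _
  · rw [← le_div_iff₀ h0]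
    refine matrix_norm_le_bound _ _ (div_nonneg (norm_nonneg _) (norm_nonneg _)) fun x => ?_
    rw [div_mul_eq_mul_div, le_div_iff₀ h0]
    calc ‖(WithLp.equiv 2 (ι → ℝ)).symm (A *ᵥ x)‖ * ‖B‖ ≤
        ‖A ⊗ₖ B‖ * ‖(WithLp.equiv 2 (ι → ℝ)).symm x‖ := h4 x
      _ = ‖A ⊗ₖ B‖ * ‖(WithLp.equiv 2 (ι → ℝ)).symm x‖ := rfl

lemma norm_kron (A : Matrix ι ι ℝ) (B : Matrix κ κ ℝ) :
    ‖A ⊗ₖ B‖ = ‖A‖ * ‖B‖ :=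
  le_antisymm (norm_kron_le A B) (norm_mul_norm_le_kron A B)


lemma matrix_norm_one_le {ι : Type*} [Fintype ι] [DecidableEq ι] :
    ‖(1 : Matrix ι ι ℝ)‖ ≤ 1 := by
  rw [Matrix.cstar_norm_def, _root_.map_one]
  exact ContinuousLinearMap.norm_id_le

lemma matrix_norm_one {ι : Type*} [Fintype ι] [DecidableEq ι] [Nonempty ι] :
    ‖(1 : Matrix ι ι ℝ)‖ = 1 := by
  haveI : Nontrivial (EuclideanSpace ℝ ι) := inferInstance
  rw [Matrix.cstar_norm_def, _root_.map_one]
  exact ContinuousLinearMap.norm_id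

lemma kronPow_one {n : ℕ} (l : ℕ) :
    kronPow (1 : Matrix (Fin n) (Fin n) ℝ) l = 1 := by
  induction l with
  | zero => rfl
  | succ k ih =>
      rw [kronPow, ih, Matrix.one_kronecker_one, Matrix.reindex_apply,
        Matrix.submatrix_one_equiv]

lemma kronPow_mul {n : ℕ} (M N : Matrix (Fin n) (Fin n) ℝ) (l : ℕ) :
    kronPow (M * N) l = kronPow M l * kronPow N l := by
  induction l with
  | zero => rw [kronPow]; exact (one_mul 1).symm
  | succ k ih =>
      rw [kronPow, kronPow, kronPow, ih, Matrix.mul_kronecker_mul,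
        Matrix.reindex_apply, Matrix.reindex_apply, Matrix.reindex_apply,
        Matrix.submatrix_mul_equiv]

lemma norm_kronPow {n : ℕ} (M : Matrix (Fin n) (Fin n) ℝ) (l : ℕ) :
    ‖kronPow M l‖ = ‖M‖ ^ l := by
  induction l with
  | zero => rw [kronPow, pow_zero]; exact matrix_norm_one
  | succ k ih =>
      rw [kronPow, Matrix.reindex_apply, ← Matrix.reindex_apply, norm_reindex,
        norm_kron, ih, pow_succ]

/-- `kronPow · l` as a monoid hom. -/
noncomputable def kronPowHom (n l : ℕ) :
    Matrix (Fin n) (Fin n) ℝ →* Matrix (Fin (n ^ l)) (Fin (n ^ l)) ℝ where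
  toFun M := kronPow M l
  map_one' := kronPow_one l
  map_mul' M N := kronPow_mul M N l

lemma wordProd_kronPow {n m k : ℕ} (A : Fin m → Matrix (Fin n) (Fin n) ℝ) (l : ℕ)
    (σ : Fin k → Fin m) :
    wordProd (fun i => kronPow (A i) l) σ = kronPow (wordProd A σ) l := by
  unfold wordProd
  have h1 : (List.ofFn fun i => kronPow (A (σ i)) l) =
      (List.ofFn fun i => A (σ i)).map (kronPowHom n l) := by
    rw [List.map_ofFn]; rfl
  rw [h1, ← List.map_reverse, List.prod_hom _ (kronPowHom n l)]
  rfl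

lemma norm_listProd_le {ι : Type*} [Fintype ι] [DecidableEq ι]
    (L : List (Matrix ι ι ℝ)) (D : ℝ) (hD : 1 ≤ D) (h : ∀ M ∈ L, ‖M‖ ≤ D) :
    ‖L.prod‖ ≤ D ^ L.length := by
  induction L with
  | nil => simpa using matrix_norm_one_le
  | cons M L ih =>
      rw [List.prod_cons, List.length_cons, pow_succ']
      calc ‖M * L.prod‖ ≤ ‖M‖ * ‖L.prod‖ := Matrix.l2_opNorm_mul _ _
        _ ≤ D * D ^ L.length := mul_le_mul (h M List.mem_cons_self)
            (ih fun N hN => h N (List.mem_cons_of_mem _ hN)) (norm_nonneg _)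
            (le_trans zero_le_one hD)

lemma rpow_swap {x : ℝ} (hx : 0 ≤ x) (l : ℕ) (c : ℝ) : (x ^ l) ^ c = (x ^ c) ^ l := by
  rw [← Real.rpow_natCast x l, ← Real.rpow_natCast (x ^ c) l, ← Real.rpow_mul hx,
    ← Real.rpow_mul hx, mul_comm]

end Helpers

open scoped Matrix.Norms.L2Operator in
/-- `ρ(A₁^{⊗l}, …, Aₘ^{⊗l}) = ρ(A₁, …, Aₘ)^l`. -/
theorem jsr_kronPow {n m : ℕ} (hm : 0 < m)
    (A : Fin m → Matrix (Fin n) (Fin n) ℝ) (l : ℕ) (hl : 1 ≤ l) :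
    jsr (fun i => kronPow (A i) l) = jsr A ^ l := by
  classical
  have hne : ∀ k : ℕ, Nonempty (Fin k → Fin m) := fun k => ⟨fun _ => ⟨0, hm⟩⟩
  set f : ℕ → ℝ := fun k => ⨆ σ : Fin k → Fin m,
    l2OpNorm (wordProd A σ) ^ ((1 : ℝ) / (k : ℝ)) with hfdef
  have hnn : ∀ {k : ℕ} (σ : Fin k → Fin m), 0 ≤ l2OpNorm (wordProd A σ) := by
    intro k σ; rw [l2OpNorm_eq]; exact norm_nonneg _
  -- Step A : pointwise identification
  have hA : ∀ k : ℕ, (⨆ σ : Fin k → Fin m,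
      l2OpNorm (wordProd (fun i => kronPow (A i) l) σ) ^ ((1 : ℝ) / (k : ℝ))) = f k ^ l := by
    intro k
    haveI := hne k
    have hterm : ∀ σ : Fin k → Fin m,
        l2OpNorm (wordProd (fun i => kronPow (A i) l) σ) ^ ((1 : ℝ) / (k : ℝ)) =
          (l2OpNorm (wordProd A σ) ^ ((1 : ℝ) / (k : ℝ))) ^ l := by
      intro σ
      rw [l2OpNorm_eq, wordProd_kronPow, norm_kronPow, ← l2OpNorm_eq,
        rpow_swap (hnn σ) l]
    obtain ⟨σ₀, hσ₀⟩ := Finite.exists_max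
      (fun σ : Fin k → Fin m => l2OpNorm (wordProd A σ) ^ ((1 : ℝ) / (k : ℝ)))
    have hsup : f k = l2OpNorm (wordProd A σ₀) ^ ((1 : ℝ) / (k : ℝ)) :=
      le_antisymm (ciSup_le hσ₀)
        (le_ciSup (f := fun σ : Fin k → Fin m =>
          l2OpNorm (wordProd A σ) ^ ((1 : ℝ) / (k : ℝ)))
          (Set.Finite.bddAbove (Set.finite_range _)) σ₀)
    have hsup2 : (⨆ σ : Fin k → Fin m,
        l2OpNorm (wordProd (fun i => kronPow (A i) l) σ) ^ ((1 : ℝ) / (k : ℝ))) =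
          (l2OpNorm (wordProd A σ₀) ^ ((1 : ℝ) / (k : ℝ))) ^ l := by
      refine le_antisymm (ciSup_le fun σ => ?_) ?_
      · rw [hterm σ]
        exact pow_le_pow_left₀ (Real.rpow_nonneg (hnn σ) _) (hσ₀ σ) l
      · rw [← hterm σ₀]
        exact le_ciSup (f := fun σ : Fin k → Fin m =>
          l2OpNorm (wordProd (fun i => kronPow (A i) l) σ) ^ ((1 : ℝ) / (k : ℝ)))
          (Set.Finite.bddAbove (Set.finite_range _)) σ₀
    rw [hsup2, hsup]
  -- Step B : bounds
  haveI : Nonempty (Fin m) := ⟨⟨0, hm⟩⟩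
  set D : ℝ := max 1 (⨆ i : Fin m, l2OpNorm (A i)) with hDdef
  have hD1 : (1 : ℝ) ≤ D := le_max_left _ _
  have hD0 : (0 : ℝ) ≤ D := le_trans zero_le_one hD1
  have hAi : ∀ i : Fin m, l2OpNorm (A i) ≤ D := fun i =>
    le_trans (le_ciSup (f := fun i : Fin m => l2OpNorm (A i))
      (Set.Finite.bddAbove (Set.finite_range _)) i) (le_max_right _ _)
  have hfD : ∀ k, f k ≤ D := by
    intro k
    haveI := hne k
    refine ciSup_le fun σ => ?_
    rcases Nat.eq_zero_or_pos k with hk | hk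
    · subst hk
      simp only [Nat.cast_zero, div_zero, Real.rpow_zero]
      exact hD1
    · have hw : l2OpNorm (wordProd A σ) ≤ D ^ k := by
        rw [l2OpNorm_eq]
        have hlen : ((List.ofFn fun i => A (σ i)).reverse).length = k := by simp
        have := norm_listProd_le ((List.ofFn fun i => A (σ i)).reverse) D hD1 ?_
        · rw [hlen] at this; exact this
        · intro M hM
          rw [List.mem_reverse, List.mem_ofFn] at hM
          obtain ⟨i, rfl⟩ := hM
          rw [← l2OpNorm_eq]; exact hAi _
      calc l2OpNorm (wordProd A σ) ^ ((1 : ℝ) / (k : ℝ))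
          ≤ (D ^ k) ^ ((1 : ℝ) / (k : ℝ)) :=
            Real.rpow_le_rpow (hnn σ) hw (by positivity)
        _ = D := by
            rw [← Real.rpow_natCast D k, ← Real.rpow_mul hD0, mul_one_div,
              div_self (Nat.cast_ne_zero.2 hk.ne'), Real.rpow_one]
  have hf0 : ∀ k, 0 ≤ f k := fun k =>
    Real.iSup_nonneg fun σ => Real.rpow_nonneg (hnn σ) _
  -- Step C : limsup manipulation
  have hbdd : Filter.atTop.IsBoundedUnder (· ≤ ·) f :=
    Filter.isBoundedUnder_of ⟨D, hfD⟩
  have hbddge : Filter.atTop.IsBoundedUnder (· ≥ ·) f :=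
    Filter.isBoundedUnder_of ⟨0, hf0⟩
  have hcobdd : Filter.atTop.IsCoboundedUnder (· ≤ ·) f :=
    hbddge.isCoboundedUnder_le
  have hlims : 0 ≤ Filter.atTop.limsup f :=
    Filter.le_limsup_of_frequently_le (Filter.Frequently.of_forall hf0) hbdd
  set g : ℝ → ℝ := fun x => (max x 0) ^ l with hgdef
  have hg : Monotone g := fun a b hab =>
    pow_le_pow_left₀ (le_max_right a 0) (max_le_max hab le_rfl) l
  have hgc : ContinuousAt g (Filter.atTop.limsup f) :=
    ((continuous_id.max continuous_const).pow l).continuousAt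
  have hmap := hg.map_limsup_of_continuousAt f hgc hbdd hcobdd
  have hgf : g ∘ f = fun k => f k ^ l := by
    funext k; simp only [hgdef, Function.comp_apply, max_eq_left (hf0 k)]
  have hglim : g (Filter.atTop.limsup f) = Filter.atTop.limsup f ^ l := by
    simp only [hgdef, max_eq_left hlims]
  have hjsr : jsr A = Filter.atTop.limsup f := rfl
  calc jsr (fun i => kronPow (A i) l)
      = Filter.atTop.limsup fun k : ℕ => (⨆ σ : Fin k → Fin m,
          l2OpNorm (wordProd (fun i => kronPow (A i) l) σ) ^ ((1 : ℝ) / (k : ℝ))) := rfl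
    _ = Filter.atTop.limsup fun k : ℕ => f k ^ l := by
        congr 1; funext k; exact hA k
    _ = Filter.atTop.limsup (g ∘ f) := by rw [hgf]
    _ = g (Filter.atTop.limsup f) := hmap.symm
    _ = Filter.atTop.limsup f ^ l := hglim
    _ = jsr A ^ l := by rw [hjsr]
end

section
/- Let K₁ ⊆ ℝⁿ and K₂ ⊆ ℝᵐ be proper cones, and let K₁ ⊗ K₂ = { u ⊗ v : u ∈ K₁, v ∈ K₂ } ⊆ ℝ^{nm}, where u ⊗ v denotes the Kronecker product of the column vectors u and v (the vector whose ((i−1)m+j)-th entry is u_i·v_j). Then the closure of the convex hull of K₁ ⊗ K₂ is a proper cone in ℝ^{nm}. -/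
/-- The Kronecker product of two column vectors: the entry of `u ⊗ v` at the
index corresponding to the pair `(i, j)` is `u i * v j`. -/
def vecKron {n m : ℕ} (u : Fin n → ℝ) (v : Fin m → ℝ) : Fin (n * m) → ℝ :=
  fun a => u (finProdFinEquiv.symm a).1 * v (finProdFinEquiv.symm a).2

open Finset

/-- Dot product on `Fin n → ℝ`. -/
def dotp {n : ℕ} (a b : Fin n → ℝ) : ℝ := ∑ i, a i * b i

lemma dotp_isLinearMap {n : ℕ} (w : Fin n → ℝ) :
    IsLinearMap ℝ (fun z : Fin n → ℝ => dotp w z) := by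
  constructor
  · intro x y; simp [dotp, mul_add, Finset.sum_add_distrib]
  · intro c x
    simp only [dotp, Pi.smul_apply, smul_eq_mul, Finset.mul_sum]
    exact Finset.sum_congr rfl fun i _ => by ring

lemma continuous_dotp {n : ℕ} (w : Fin n → ℝ) :
    Continuous (fun z : Fin n → ℝ => dotp w z) :=
  continuous_finset_sum _ fun i _ => continuous_const.mul (continuous_apply i)

lemma vecKron_zero_left {n m : ℕ} (v : Fin m → ℝ) :
    vecKron (0 : Fin n → ℝ) v = 0 := by
  funext a; simp [vecKron]

lemma vecKron_zero_right {n m : ℕ} (u : Fin n → ℝ) :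
    vecKron u (0 : Fin m → ℝ) = 0 := by
  funext a; simp [vecKron]

lemma vecKron_add_left {n m : ℕ} (u u' : Fin n → ℝ) (v : Fin m → ℝ) :
    vecKron (u + u') v = vecKron u v + vecKron u' v := by
  funext a; simp [vecKron, add_mul]

lemma vecKron_add_right {n m : ℕ} (u : Fin n → ℝ) (v v' : Fin m → ℝ) :
    vecKron u (v + v') = vecKron u v + vecKron u v' := by
  funext a; simp [vecKron, mul_add]

lemma vecKron_smul_left {n m : ℕ} (c : ℝ) (u : Fin n → ℝ) (v : Fin m → ℝ) :
    vecKron (c • u) v = c • vecKron u v := by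
  funext a; simp [vecKron, mul_assoc]

lemma vecKron_smul_right {n m : ℕ} (c : ℝ) (u : Fin n → ℝ) (v : Fin m → ℝ) :
    vecKron u (c • v) = c • vecKron u v := by
  funext a; simp [vecKron]; ring

/-- Contraction identity. -/
lemma dotp_vecKron {n m : ℕ} (a : Fin n → ℝ) (b : Fin m → ℝ) (z : Fin (n * m) → ℝ) :
    dotp (vecKron a b) z
      = dotp a (fun i => ∑ j, b j * z (finProdFinEquiv (i, j))) := by
  unfold dotp vecKron
  rw [← Equiv.sum_comp finProdFinEquiv
    (fun c => a (finProdFinEquiv.symm c).1 * b (finProdFinEquiv.symm c).2 * z c)]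
  simp only [Equiv.symm_apply_apply]
  rw [Fintype.sum_prod_type]
  congr 1; funext i
  rw [Finset.mul_sum]
  congr 1; funext j; ring

/-- The canonical basis vectors are Kronecker products of basis vectors. -/
lemma single_eq_vecKron {n m : ℕ} (a : Fin (n * m)) :
    (Pi.single a 1 : Fin (n * m) → ℝ)
      = vecKron (Pi.single (finProdFinEquiv.symm a).1 1)
          (Pi.single (finProdFinEquiv.symm a).2 1) := by
  funext c
  simp only [vecKron, Pi.single_apply]
  by_cases h : c = a
  · subst h; simp
  · have h' : ¬ ((finProdFinEquiv.symm c).1 = (finProdFinEquiv.symm a).1 ∧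
        (finProdFinEquiv.symm c).2 = (finProdFinEquiv.symm a).2) := by
      intro ⟨h1, h2⟩
      exact h (finProdFinEquiv.symm.injective (Prod.ext h1 h2))
    rw [if_neg h]
    rcases not_and_or.mp h' with h1 | h1 <;> rw [if_neg h1] <;> ring

/-- If `K₁` and `K₂` span everything, so do their Kronecker products. -/
lemma span_vecKron_eq_top {n m : ℕ} (K₁ : Set (Fin n → ℝ)) (K₂ : Set (Fin m → ℝ))
    (h1 : Submodule.span ℝ K₁ = ⊤) (h2 : Submodule.span ℝ K₂ = ⊤) :
    Submodule.span ℝ {z | ∃ u ∈ K₁, ∃ v ∈ K₂, z = vecKron u v} = ⊤ := by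
  set S : Set (Fin (n * m) → ℝ) := {z | ∃ u ∈ K₁, ∃ v ∈ K₂, z = vecKron u v} with hS
  have key : ∀ u v, vecKron u v ∈ Submodule.span ℝ S := by
    intro u v
    have hu : u ∈ Submodule.span ℝ K₁ := by rw [h1]; trivial
    induction hu using Submodule.span_induction with
    | mem x hx =>
        have hv : v ∈ Submodule.span ℝ K₂ := by rw [h2]; trivial
        induction hv using Submodule.span_induction with
        | mem y hy => exact Submodule.subset_span ⟨x, hx, y, hy, rfl⟩
        | zero => rw [vecKron_zero_right]; exact Submodule.zero_mem _
        | add y y' _ _ iy iy' => rw [vecKron_add_right]; exact Submodule.add_mem _ iy iy'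
        | smul c y _ iy => rw [vecKron_smul_right]; exact Submodule.smul_mem _ _ iy
    | zero => rw [vecKron_zero_left]; exact Submodule.zero_mem _
    | add x x' _ _ ix ix' => rw [vecKron_add_left]; exact Submodule.add_mem _ ix ix'
    | smul c x _ ix => rw [vecKron_smul_left]; exact Submodule.smul_mem _ _ ix
  rw [eq_top_iff]
  intro z _
  have hz : z = ∑ a, (z a) • (Pi.single a 1 : Fin (n * m) → ℝ) := by
    funext c
    rw [Finset.sum_apply]
    simp [Pi.single_apply, Finset.sum_ite_eq', mul_comm]
  rw [hz]
  exact Submodule.sum_mem _ fun a _ => Submodule.smul_mem _ _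
    (by rw [single_eq_vecKron]; exact key _ _)

/-- A set with nonempty interior spans everything. -/
lemma span_eq_top_of_interior_nonempty {n : ℕ} {K : Set (Fin n → ℝ)}
    (h : (interior K).Nonempty) : Submodule.span ℝ K = ⊤ := by
  obtain ⟨x, hx⟩ := h
  rw [mem_interior_iff_mem_nhds, Metric.mem_nhds_iff] at hx
  obtain ⟨ε, hε, hball⟩ := hx
  rw [Submodule.eq_top_iff']
  intro w
  rcases eq_or_ne w 0 with rfl | hw
  · exact Submodule.zero_mem _
  have hnw : 0 < ‖w‖ := norm_pos_iff.mpr hw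
  set δ : ℝ := ε / (2 * ‖w‖) with hδ
  have hδpos : 0 < δ := by positivity
  have hmem : x + δ • w ∈ K := by
    apply hball
    simp only [Metric.mem_ball, dist_eq_norm, add_sub_cancel_left, norm_smul,
      Real.norm_eq_abs, abs_of_pos hδpos]
    rw [hδ, div_mul_eq_mul_div, mul_comm]
    rw [div_lt_iff₀ (by positivity)]
    nlinarith
  have hxK : x ∈ K := hball (Metric.mem_ball_self hε)
  have h1 : (x + δ • w) - x ∈ Submodule.span ℝ K :=
    Submodule.sub_mem _ (Submodule.subset_span hmem) (Submodule.subset_span hxK)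
  have h2 : δ • w ∈ Submodule.span ℝ K := by simpa using h1
  have := Submodule.smul_mem _ δ⁻¹ h2
  rwa [smul_smul, inv_mul_cancel₀ (ne_of_gt hδpos), one_smul] at this

/-- If `z` pairs nonnegatively with every element of the dual cone of a closed
convex cone `K`, then `z ∈ K`. -/
lemma mem_of_forall_dual {n : ℕ} {K : Set (Fin n → ℝ)}
    (hcl : IsClosed K) (hconv : Convex ℝ K)
    (hcone : ∀ c : ℝ, 0 ≤ c → ∀ v ∈ K, c • v ∈ K) (h0 : (0 : Fin n → ℝ) ∈ K)
    {z : Fin n → ℝ} (hz : ∀ a : Fin n → ℝ, (∀ u ∈ K, 0 ≤ dotp a u) → 0 ≤ dotp a z) :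
    z ∈ K := by
  by_contra hzK
  obtain ⟨f, u, hfK, hfz⟩ := geometric_hahn_banach_closed_point hconv hcl hzK
  have hu : 0 < u := by simpa using hfK 0 h0
  have hfx : ∀ x ∈ K, f x ≤ 0 := by
    intro x hx
    by_contra h
    push_neg at h
    have hc : ∀ c : ℝ, 0 ≤ c → c * f x < u := by
      intro c hcnn
      have := hfK _ (hcone c hcnn x hx)
      simpa [map_smul, smul_eq_mul] using this
    have := hc (u / f x) (le_of_lt (div_pos hu h))
    rw [div_mul_cancel₀ _ (ne_of_gt h)] at this
    exact lt_irrefl _ this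
  set a : Fin n → ℝ := fun i => - f (fun j => if i = j then 1 else 0) with ha
  have hrep : ∀ x : Fin n → ℝ, dotp a x = - f x := by
    intro x
    have := LinearMap.pi_apply_eq_sum_univ (f : (Fin n → ℝ) →ₗ[ℝ] ℝ) x
    simp only [ContinuousLinearMap.coe_coe] at this
    rw [dotp, this, ← Finset.sum_neg_distrib]
    congr 1; funext i
    simp [ha, smul_eq_mul]; ring
  have haK : ∀ x ∈ K, 0 ≤ dotp a x := by
    intro x hx; rw [hrep]; linarith [hfx x hx]
  have := hz a haK
  rw [hrep] at this
  linarith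

/-- The closed convex hull of the Kronecker product of two proper cones is a
proper cone. -/
theorem isProperCone_closure_convexHull_vecKron {n m : ℕ}
    (K₁ : Set (Fin n → ℝ)) (K₂ : Set (Fin m → ℝ))
    (h₁ : IsProperCone K₁) (h₂ : IsProperCone K₂) :
    IsProperCone
      (closure (convexHull ℝ {z | ∃ u ∈ K₁, ∃ v ∈ K₂, z = vecKron u v})) := by
  obtain ⟨h₁cl, h₁conv, h₁cone, h₁int, h₁pt⟩ := h₁
  obtain ⟨h₂cl, h₂conv, h₂cone, h₂int, h₂pt⟩ := h₂
  set S : Set (Fin (n * m) → ℝ) := {z | ∃ u ∈ K₁, ∃ v ∈ K₂, z = vecKron u v} with hSdef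
  set C : Set (Fin (n * m) → ℝ) := closure (convexHull ℝ S) with hCdef
  have h01 : (0 : Fin n → ℝ) ∈ K₁ := by
    have : (0 : Fin n → ℝ) ∈ K₁ ∩ (-K₁) := by rw [h₁pt]; rfl
    exact this.1
  have h02 : (0 : Fin m → ℝ) ∈ K₂ := by
    have : (0 : Fin m → ℝ) ∈ K₂ ∩ (-K₂) := by rw [h₂pt]; rfl
    exact this.1
  have h0S : (0 : Fin (n * m) → ℝ) ∈ S := ⟨0, h01, 0, h02, (vecKron_zero_left 0).symm⟩
  have h0C : (0 : Fin (n * m) → ℝ) ∈ C :=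
    subset_closure (subset_convexHull ℝ S h0S)
  -- the dual pairing is nonnegative on C
  have keyA : ∀ a : Fin n → ℝ, (∀ u ∈ K₁, 0 ≤ dotp a u) →
      ∀ b : Fin m → ℝ, (∀ v ∈ K₂, 0 ≤ dotp b v) →
      ∀ y ∈ C, 0 ≤ dotp (vecKron a b) y := by
    intro a ha b hb y hy
    set D : Set (Fin (n * m) → ℝ) := {y | 0 ≤ dotp (vecKron a b) y} with hD
    have hDconv : Convex ℝ D := convex_halfSpace_ge (dotp_isLinearMap _) 0
    have hDcl : IsClosed D := IsClosed.preimage (continuous_dotp _) isClosed_Ici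
    have hSD : S ⊆ D := by
      rintro _ ⟨u, hu, v, hv, rfl⟩
      show 0 ≤ dotp (vecKron a b) (vecKron u v)
      rw [dotp_vecKron]
      have : (fun i => ∑ j, b j * vecKron u v (finProdFinEquiv (i, j)))
          = fun i => u i * dotp b v := by
        funext i
        simp only [vecKron, Equiv.symm_apply_apply]
        rw [dotp, Finset.mul_sum]
        exact Finset.sum_congr rfl fun j _ => by ring
      rw [this]
      have : dotp a (fun i => u i * dotp b v) = dotp b v * dotp a u := by
        simp only [dotp]
        rw [Finset.mul_sum]
        exact Finset.sum_congr rfl fun i _ => by ring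
      rw [this]
      exact mul_nonneg (hb v hv) (ha u hu)
    exact closure_minimal (convexHull_min hSD hDconv) hDcl hy
  refine ⟨isClosed_closure, (convex_convexHull ℝ S).closure, ?_, ?_, ?_⟩
  · -- cone property
    intro c hc z hz
    have hSmul : (fun x : Fin (n * m) → ℝ => c • x) '' S ⊆ S := by
      rintro _ ⟨_, ⟨u, hu, v, hv, rfl⟩, rfl⟩
      exact ⟨c • u, h₁cone c hc u hu, v, hv, (vecKron_smul_left c u v).symm⟩
    have hconvH : (fun x : Fin (n * m) → ℝ => c • x) '' convexHull ℝ S ⊆ convexHull ℝ S := by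
      rw [Set.image_smul, ← convexHull_smul]
      apply convexHull_mono
      rintro _ ⟨x, hx, rfl⟩
      exact hSmul ⟨x, hx, rfl⟩
    have himg : c • z ∈ (fun x : Fin (n * m) → ℝ => c • x) '' closure (convexHull ℝ S) :=
      ⟨z, hz, rfl⟩
    exact closure_mono hconvH
      (image_closure_subset_closure_image (continuous_const_smul c) himg)
  · -- nonempty interior
    have hspan : Submodule.span ℝ S = ⊤ :=
      span_vecKron_eq_top K₁ K₂ (span_eq_top_of_interior_nonempty h₁int)
        (span_eq_top_of_interior_nonempty h₂int)
    rw [(convex_convexHull ℝ S).closure.interior_nonempty_iff_affineSpan_eq_top]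
    rw [eq_top_iff]
    refine le_trans ?_ (affineSpan_mono ℝ
      ((subset_convexHull ℝ S).trans subset_closure))
    rw [top_le_iff]
    rw [AffineSubspace.affineSpan_eq_top_iff_vectorSpan_eq_top_of_nonempty ℝ (Fin (n * m) → ℝ)
      (Fin (n * m) → ℝ) ⟨0, h0S⟩]
    rw [eq_top_iff, ← hspan]
    apply Submodule.span_le.mpr
    intro w hw
    have : w - 0 ∈ vectorSpan ℝ S := vsub_mem_vectorSpan ℝ hw h0S
    simpa using this
  · -- pointedness
    apply Set.Subset.antisymm
    · rintro z ⟨hz, hz'⟩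
      rw [Set.mem_neg] at hz'
      have hzero : ∀ a : Fin n → ℝ, (∀ u ∈ K₁, 0 ≤ dotp a u) →
          ∀ b : Fin m → ℝ, (∀ v ∈ K₂, 0 ≤ dotp b v) →
          dotp (vecKron a b) z = 0 := by
        intro a ha b hb
        have hpos := keyA a ha b hb z hz
        have hneg := keyA a ha b hb (-z) hz'
        have : dotp (vecKron a b) (-z) = - dotp (vecKron a b) z := by
          simp [dotp]
        rw [this] at hneg
        linarith
      -- contract in the first factor
      have step1 : ∀ b : Fin m → ℝ, (∀ v ∈ K₂, 0 ≤ dotp b v) →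
          (fun i => ∑ j, b j * z (finProdFinEquiv (i, j))) = 0 := by
        intro b hb
        set w : Fin n → ℝ := fun i => ∑ j, b j * z (finProdFinEquiv (i, j)) with hw
        have hwd : ∀ a : Fin n → ℝ, (∀ u ∈ K₁, 0 ≤ dotp a u) → dotp a w = 0 := by
          intro a ha
          have := hzero a ha b hb
          rwa [dotp_vecKron] at this
        have hwK : w ∈ K₁ :=
          mem_of_forall_dual h₁cl h₁conv h₁cone h01 fun a ha => le_of_eq (hwd a ha).symm
        have hwK' : -w ∈ K₁ := by
          apply mem_of_forall_dual h₁cl h₁conv h₁cone h01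
          intro a ha
          have : dotp a (-w) = - dotp a w := by simp [dotp]
          rw [this, hwd a ha]
          simp
        have : w ∈ K₁ ∩ (-K₁) := ⟨hwK, by rwa [Set.mem_neg]⟩
        rw [h₁pt] at this
        exact this
      -- contract in the second factor
      have step2 : ∀ i : Fin n, (fun j => z (finProdFinEquiv (i, j))) = 0 := by
        intro i
        set y : Fin m → ℝ := fun j => z (finProdFinEquiv (i, j)) with hy
        have hyd : ∀ b : Fin m → ℝ, (∀ v ∈ K₂, 0 ≤ dotp b v) → dotp b y = 0 := by
          intro b hb
          have := congrFun (step1 b hb) i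
          simpa [dotp, mul_comm] using this
        have hyK : y ∈ K₂ :=
          mem_of_forall_dual h₂cl h₂conv h₂cone h02 fun b hb => le_of_eq (hyd b hb).symm
        have hyK' : -y ∈ K₂ := by
          apply mem_of_forall_dual h₂cl h₂conv h₂cone h02
          intro b hb
          have : dotp b (-y) = - dotp b y := by simp [dotp]
          rw [this, hyd b hb]
          simp
        have : y ∈ K₂ ∩ (-K₂) := ⟨hyK, by rwa [Set.mem_neg]⟩
        rw [h₂pt] at this
        exact this
      have : z = 0 := by
        funext c
        have h3 := congrFun (step2 (finProdFinEquiv.symm c).1) (finProdFinEquiv.symm c).2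
        simpa only [Prod.mk.eta, Equiv.apply_symm_apply, Pi.zero_apply] using h3
      exact this
    · intro z hz
      rw [Set.mem_singleton_iff] at hz
      subst hz
      exact ⟨h0C, by simpa [Set.mem_neg] using h0C⟩
end
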